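/- arXiv:1308.1766 — 5 statements merged into one kernel-verified Lean document; each statement's English description precedes it below -/
import Mathlib

section
/- Let S be a p×p Hermitian matrix written in block form S = [[S₁₁, S₁₂],[S₁₂*, S₂₂]], where S₁₁ is q×q and S₂₂ is r×r with q + r = p, and let D = diag(S₁₁, S₂₂) be its block-diagonal part. Let λ_j(·) denote the j-th largest eigenvalue of a Hermitian matrix. If λ_q(S₁₁) > λ_1(S₂₂), then for every j = 1,…,p: |λ_j(S) − λ_j(D)| ≤ ‖S₁₂‖²/(λ_q(S₁₁) − λ_1(S₂₂)), where ‖·‖ denotes the operator (spectral) norm. -/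
open MeasureTheory Filter Matrix
open scoped ENNReal BigOperators Classical

/-- The operator (spectral) norm of a complex matrix. -/
noncomputable def opNorm {m n : ℕ} (M : Matrix (Fin m) (Fin n) ℂ) : ℝ :=
  ‖LinearMap.toContinuousLinearMap (Matrix.toEuclideanLin M)‖

/-- The `j`-th largest eigenvalue of a Hermitian matrix (junk value `0` otherwise). -/
noncomputable def eigDesc {m : ℕ} (M : Matrix (Fin m) (Fin m) ℂ) (j : Fin m) : ℝ :=
  if h : M.IsHermitian then
    (((Multiset.map h.eigenvalues Finset.univ.val).sort (· ≤ ·)).reverse.getD j 0)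
  else 0

/-!
Both bounds come from Courant–Fischer: `λ_j(S) ≥ c` as soon as `⟪x, S x⟫ ≥ c ‖x‖²` on a
subspace of dimension `j + 1`, and `λ_j(S) ≤ c` as soon as `⟪x, S x⟫ ≤ c ‖x‖²` on a subspace
of codimension `j`. For `j < q` test `S` on `V ⊕ 0` and on `W ⊕ ℂʳ`, where `V` (resp. `W`) is
spanned by the eigenvectors of `S₁₁` for its `j + 1` largest (resp. `q - j` smallest)
eigenvalues; for `j ≥ q` swap the roles of the two blocks. On `x ⊕ y` the off-diagonal block
contributes `2 Re ⟪x, S₁₂ y⟫`, which AM–GM with weight `δ = λ_q(S₁₁) - λ_1(S₂₂)` bounds by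
`δ ‖·‖² + ‖S₁₂‖² / δ ‖·‖²`, and the gap absorbs the first term. So every `λ_j(S)` lies within
`‖S₁₂‖² / δ` of the `j`-th entry of `(λ(S₁₁), λ(S₂₂))`; taking `S₁₂ = 0` shows that this list
is `λ(D)`.
-/

open Module Submodule

theorem Submodule.exists_mem_mem_ne_zero_of_finrank_lt {K V : Type*} [DivisionRing K]
    [AddCommGroup V] [Module K V] [FiniteDimensional K V] {s t : Submodule K V}
    (h : finrank K V < finrank K s + finrank K t) : ∃ x ∈ s, x ∈ t ∧ x ≠ 0 := by
  by_contra! hst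
  exact h.not_ge (finrank_add_finrank_le_of_disjoint (disjoint_def.mpr hst))

theorem Submodule.finrank_prod {K M N : Type*} [DivisionRing K] [AddCommGroup M] [Module K M]
    [AddCommGroup N] [Module K N] (P : Submodule K M) (Q : Submodule K N)
    [FiniteDimensional K P] [FiniteDimensional K Q] :
    finrank K (P.prod Q) = finrank K P + finrank K Q := by
  have hrange : P.prod Q = (P.subtype.prodMap Q.subtype).range := by
    rw [LinearMap.range_prodMap, range_subtype, range_subtype]
  rw [hrange, LinearMap.finrank_range_of_inj
    (Prod.map_injective.mpr ⟨P.injective_subtype, Q.injective_subtype⟩), Module.finrank_prod]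

namespace OrthonormalBasis

variable {ι 𝕜 E : Type*} [Fintype ι] [RCLike 𝕜] [NormedAddCommGroup E] [InnerProductSpace 𝕜 E]
  (b : OrthonormalBasis ι 𝕜 E)

theorem repr_eq_zero_of_mem_span_image {s : Set ι} {x : E} (hx : x ∈ span 𝕜 (b '' s)) {i : ι}
    (hi : i ∉ s) : b.repr x i = 0 := by
  rw [← b.coe_toBasis_repr_apply, ← Finsupp.notMem_support_iff]
  exact fun h => hi (b.toBasis.repr_support_subset_of_mem_span s (by simpa using hx) h)

theorem finrank_span_image (s : Finset ι) : finrank 𝕜 (span 𝕜 (b '' s)) = s.card := by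
  have hli : LinearIndependent 𝕜 fun i : (s : Set ι) => b i :=
    b.orthonormal.linearIndependent.comp _ Subtype.val_injective
  rw [Set.image_eq_range, finrank_span_eq_card hli]
  simp

end OrthonormalBasis

namespace LinearMap.IsSymmetric

variable {𝕜 E : Type*} [RCLike 𝕜] [NormedAddCommGroup E] [InnerProductSpace 𝕜 E]
  [FiniteDimensional 𝕜 E] {T : E →ₗ[𝕜] E} (hT : T.IsSymmetric) {n : ℕ} (hn : finrank 𝕜 E = n)

theorem re_inner_apply_eq_sum (x : E) :
    RCLike.re (inner 𝕜 x (T x)) =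
      ∑ i, hT.eigenvalues hn i * ‖(hT.eigenvectorBasis hn).repr x i‖ ^ 2 := by
  rw [← (hT.eigenvectorBasis hn).repr.inner_map_map, PiLp.inner_apply, map_sum]
  refine Finset.sum_congr rfl fun i _ => ?_
  rw [eigenvectorBasis_apply_self_apply, ← smul_eq_mul, inner_smul_right,
    inner_self_eq_norm_sq_to_K]
  norm_cast

theorem re_inner_apply_le_of_repr_eq_zero {j : Fin n} {x : E}
    (hx : ∀ i < j, (hT.eigenvectorBasis hn).repr x i = 0) :
    RCLike.re (inner 𝕜 x (T x)) ≤ hT.eigenvalues hn j * ‖x‖ ^ 2 := by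
  rw [hT.re_inner_apply_eq_sum hn, ← (hT.eigenvectorBasis hn).repr.norm_map,
    EuclideanSpace.norm_sq_eq, Finset.mul_sum]
  refine Finset.sum_le_sum fun i _ => ?_
  rcases lt_or_ge i j with hij | hji
  · simp [hx i hij]
  · exact mul_le_mul_of_nonneg_right (hT.eigenvalues_antitone hn hji) (sq_nonneg _)

theorem le_re_inner_apply_of_repr_eq_zero {j : Fin n} {x : E}
    (hx : ∀ i, j < i → (hT.eigenvectorBasis hn).repr x i = 0) :
    hT.eigenvalues hn j * ‖x‖ ^ 2 ≤ RCLike.re (inner 𝕜 x (T x)) := by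
  rw [hT.re_inner_apply_eq_sum hn, ← (hT.eigenvectorBasis hn).repr.norm_map,
    EuclideanSpace.norm_sq_eq, Finset.mul_sum]
  refine Finset.sum_le_sum fun i _ => ?_
  rcases lt_or_ge j i with hji | hij
  · simp [hx i hji]
  · exact mul_le_mul_of_nonneg_right (hT.eigenvalues_antitone hn hij) (sq_nonneg _)

theorem re_inner_apply_le_eigenvalues_zero_mul (h0 : 0 < n) (x : E) :
    RCLike.re (inner 𝕜 x (T x)) ≤ hT.eigenvalues hn ⟨0, h0⟩ * ‖x‖ ^ 2 :=
  hT.re_inner_apply_le_of_repr_eq_zero hn fun i hi => absurd hi (by simp [Fin.lt_def])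

theorem eigenvalues_last_mul_le_re_inner_apply (h0 : 0 < n) (x : E) :
    hT.eigenvalues hn ⟨n - 1, Nat.sub_one_lt_of_lt h0⟩ * ‖x‖ ^ 2 ≤ RCLike.re (inner 𝕜 x (T x)) :=
  hT.le_re_inner_apply_of_repr_eq_zero hn fun i hi => absurd hi (by simp [Fin.lt_def]; omega)

theorem exists_finrank_eq_forall_le_re_inner (j : Fin n) :
    ∃ V : Submodule 𝕜 E, finrank 𝕜 V = j + 1 ∧
      ∀ x ∈ V, hT.eigenvalues hn j * ‖x‖ ^ 2 ≤ RCLike.re (inner 𝕜 x (T x)) := by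
  refine ⟨span 𝕜 (hT.eigenvectorBasis hn '' Finset.Iic j), by
    rw [OrthonormalBasis.finrank_span_image, Fin.card_Iic], fun x hx => ?_⟩
  exact hT.le_re_inner_apply_of_repr_eq_zero hn fun i hi =>
    (hT.eigenvectorBasis hn).repr_eq_zero_of_mem_span_image hx (by simpa using hi)

theorem exists_finrank_eq_forall_re_inner_le (j : Fin n) :
    ∃ V : Submodule 𝕜 E, finrank 𝕜 V = n - j ∧
      ∀ x ∈ V, RCLike.re (inner 𝕜 x (T x)) ≤ hT.eigenvalues hn j * ‖x‖ ^ 2 := by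
  refine ⟨span 𝕜 (hT.eigenvectorBasis hn '' Finset.Ici j), by
    rw [OrthonormalBasis.finrank_span_image, Fin.card_Ici], fun x hx => ?_⟩
  exact hT.re_inner_apply_le_of_repr_eq_zero hn fun i hi =>
    (hT.eigenvectorBasis hn).repr_eq_zero_of_mem_span_image hx (by simpa using hi)

theorem le_eigenvalues_of_forall_le_re_inner (j : Fin n) (V : Submodule 𝕜 E)
    (hV : j + 1 ≤ finrank 𝕜 V) {c : ℝ}
    (hc : ∀ x ∈ V, c * ‖x‖ ^ 2 ≤ RCLike.re (inner 𝕜 x (T x))) :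
    c ≤ hT.eigenvalues hn j := by
  obtain ⟨W, hW, hWc⟩ := hT.exists_finrank_eq_forall_re_inner_le hn j
  obtain ⟨x, hxV, hxW, hx0⟩ := exists_mem_mem_ne_zero_of_finrank_lt (s := V) (t := W) (by omega)
  exact le_of_mul_le_mul_right ((hc x hxV).trans (hWc x hxW)) (by positivity)

theorem eigenvalues_le_of_forall_re_inner_le (j : Fin n) (V : Submodule 𝕜 E)
    (hV : n - j ≤ finrank 𝕜 V) {c : ℝ}
    (hc : ∀ x ∈ V, RCLike.re (inner 𝕜 x (T x)) ≤ c * ‖x‖ ^ 2) :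
    hT.eigenvalues hn j ≤ c := by
  obtain ⟨W, hW, hWc⟩ := hT.exists_finrank_eq_forall_le_re_inner hn j
  obtain ⟨x, hxV, hxW, hx0⟩ := exists_mem_mem_ne_zero_of_finrank_lt (s := V) (t := W) (by omega)
  exact le_of_mul_le_mul_right ((hWc x hxW).trans (hc x hxV)) (by positivity)

end LinearMap.IsSymmetric

theorem eigDesc_eq_eigenvalues {m : ℕ} {M : Matrix (Fin m) (Fin m) ℂ} (hM : M.IsHermitian) :
    eigDesc M = (isSymmetric_toEuclideanLin_iff.mpr hM).eigenvalues finrank_euclideanSpace_fin := by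
  set hT := isSymmetric_toEuclideanLin_iff.mpr hM
  set s := Multiset.map hM.eigenvalues Finset.univ.val
  have hcharpoly : (toEuclideanLin M).charpoly = M.charpoly :=
    Matrix.charpoly_toLin M (PiLp.basisFun 2 ℂ (Fin m))
  have hs : s = ↑(List.ofFn (hT.eigenvalues finrank_euclideanSpace_fin)) := by
    rw [← hT.sort_roots_charpoly_eq_eigenvalues, Multiset.sort_eq, hcharpoly,
      hM.roots_charpoly_eq_eigenvalues, Multiset.map_map]
    simp [s]
  have hsort :
      (s.sort (· ≤ ·)).reverse = List.ofFn (hT.eigenvalues finrank_euclideanSpace_fin) := by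
    rw [List.Perm.eq_reverse_of_sortedLE_of_sortedGE (l₂ := List.ofFn _) _
      (List.sortedLE_iff_pairwise.mpr (Multiset.pairwise_sort _ _))
      (hT.eigenvalues_antitone _).sortedGE_ofFn, List.reverse_reverse]
    rw [← Multiset.coe_eq_coe, Multiset.sort_eq, hs]
  ext j
  rw [eigDesc, dif_pos hM, hsort, List.getD_eq_getElem _ _ (by simp), List.getElem_ofFn]

section Hermitian

variable {m : ℕ} {M : Matrix (Fin m) (Fin m) ℂ} (hM : M.IsHermitian)
include hM

theorem eigDesc_antitone : Antitone (eigDesc M) :=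
  eigDesc_eq_eigenvalues hM ▸ LinearMap.IsSymmetric.eigenvalues_antitone _ _

theorem exists_finrank_eq_forall_eigDesc_mul_le_re_inner (j : Fin m) :
    ∃ V : Submodule ℂ (EuclideanSpace ℂ (Fin m)), finrank ℂ V = j + 1 ∧
      ∀ x ∈ V, eigDesc M j * ‖x‖ ^ 2 ≤ RCLike.re (inner ℂ x (toEuclideanLin M x)) :=
  eigDesc_eq_eigenvalues hM ▸ LinearMap.IsSymmetric.exists_finrank_eq_forall_le_re_inner _ _ j

theorem exists_finrank_eq_forall_re_inner_le_eigDesc_mul (j : Fin m) :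
    ∃ V : Submodule ℂ (EuclideanSpace ℂ (Fin m)), finrank ℂ V = m - j ∧
      ∀ x ∈ V, RCLike.re (inner ℂ x (toEuclideanLin M x)) ≤ eigDesc M j * ‖x‖ ^ 2 :=
  eigDesc_eq_eigenvalues hM ▸ LinearMap.IsSymmetric.exists_finrank_eq_forall_re_inner_le _ _ j

theorem re_inner_le_eigDesc_zero_mul (h0 : 0 < m) (x : EuclideanSpace ℂ (Fin m)) :
    RCLike.re (inner ℂ x (toEuclideanLin M x)) ≤ eigDesc M ⟨0, h0⟩ * ‖x‖ ^ 2 :=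
  eigDesc_eq_eigenvalues hM ▸ LinearMap.IsSymmetric.re_inner_apply_le_eigenvalues_zero_mul _ _ h0 x

theorem eigDesc_last_mul_le_re_inner (h0 : 0 < m) (x : EuclideanSpace ℂ (Fin m)) :
    eigDesc M ⟨m - 1, Nat.sub_one_lt_of_lt h0⟩ * ‖x‖ ^ 2 ≤
      RCLike.re (inner ℂ x (toEuclideanLin M x)) :=
  eigDesc_eq_eigenvalues hM ▸ LinearMap.IsSymmetric.eigenvalues_last_mul_le_re_inner_apply _ _ h0 x

end Hermitian

theorem abs_re_inner_toEuclideanLin_le {q r : ℕ} (B : Matrix (Fin q) (Fin r) ℂ)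
    (x : EuclideanSpace ℂ (Fin q)) (y : EuclideanSpace ℂ (Fin r)) :
    |RCLike.re (inner ℂ x (toEuclideanLin B y))| ≤ opNorm B * ‖x‖ * ‖y‖ :=
  calc |RCLike.re (inner ℂ x (toEuclideanLin B y))|
      ≤ ‖x‖ * ‖toEuclideanLin B y‖ := (RCLike.abs_re_le_norm _).trans (norm_inner_le_norm _ _)
    _ ≤ ‖x‖ * (opNorm B * ‖y‖) :=
        mul_le_mul_of_nonneg_left ((toEuclideanLin B).toContinuousLinearMap.le_opNorm y)
          (norm_nonneg x)
    _ = opNorm B * ‖x‖ * ‖y‖ := by ring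

@[simp]
theorem opNorm_zero {q r : ℕ} : opNorm (0 : Matrix (Fin q) (Fin r) ℂ) = 0 := by
  simp [opNorm]

section Blocks

variable {𝕜 : Type*} [RCLike 𝕜] {q r : ℕ}

variable (𝕜 q r) in
noncomputable def blockEquiv :
    (EuclideanSpace 𝕜 (Fin q) × EuclideanSpace 𝕜 (Fin r)) ≃ₗ[𝕜] EuclideanSpace 𝕜 (Fin (q + r)) :=
  EuclideanSpace.finAddEquivProd.symm.toLinearEquiv

theorem blockEquiv_apply (x : EuclideanSpace 𝕜 (Fin q)) (y : EuclideanSpace 𝕜 (Fin r))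
    (k : Fin (q + r)) : blockEquiv 𝕜 q r (x, y) k = Sum.elim x y (finSumFinEquiv.symm k) := by
  simp [blockEquiv]; rfl

theorem inner_blockEquiv (x x' : EuclideanSpace 𝕜 (Fin q)) (y y' : EuclideanSpace 𝕜 (Fin r)) :
    inner 𝕜 (blockEquiv 𝕜 q r (x, y)) (blockEquiv 𝕜 q r (x', y')) =
      inner 𝕜 x x' + inner 𝕜 y y' := by
  simp [PiLp.inner_apply, Fin.sum_univ_add, blockEquiv_apply]

theorem norm_blockEquiv_sq (x : EuclideanSpace 𝕜 (Fin q)) (y : EuclideanSpace 𝕜 (Fin r)) :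
    ‖blockEquiv 𝕜 q r (x, y)‖ ^ 2 = ‖x‖ ^ 2 + ‖y‖ ^ 2 := by
  simp only [@norm_sq_eq_re_inner 𝕜, inner_blockEquiv, map_add]

theorem toEuclideanLin_fromBlocks_blockEquiv (A : Matrix (Fin q) (Fin q) 𝕜)
    (B : Matrix (Fin q) (Fin r) 𝕜) (C : Matrix (Fin r) (Fin q) 𝕜) (D : Matrix (Fin r) (Fin r) 𝕜)
    (x : EuclideanSpace 𝕜 (Fin q)) (y : EuclideanSpace 𝕜 (Fin r)) :
    toEuclideanLin (reindex finSumFinEquiv finSumFinEquiv (fromBlocks A B C D))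
        (blockEquiv 𝕜 q r (x, y)) =
      blockEquiv 𝕜 q r (toEuclideanLin A x + toEuclideanLin B y,
        toEuclideanLin C x + toEuclideanLin D y) := by
  have h : (blockEquiv 𝕜 q r (x, y)).ofLp ∘ finSumFinEquiv = Sum.elim x.ofLp y.ofLp := by
    ext (i | i) <;> simp [blockEquiv_apply]
  ext k
  simp only [toLpLin_apply, reindex_apply, submatrix_mulVec_equiv, Equiv.symm_symm, h,
    fromBlocks_mulVec, blockEquiv_apply]
  rfl

theorem re_inner_fromBlocks_blockEquiv (A : Matrix (Fin q) (Fin q) 𝕜)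
    (B : Matrix (Fin q) (Fin r) 𝕜) (C : Matrix (Fin r) (Fin r) 𝕜)
    (x : EuclideanSpace 𝕜 (Fin q)) (y : EuclideanSpace 𝕜 (Fin r)) :
    RCLike.re (inner 𝕜 (blockEquiv 𝕜 q r (x, y))
        (toEuclideanLin (reindex finSumFinEquiv finSumFinEquiv (fromBlocks A B Bᴴ C))
          (blockEquiv 𝕜 q r (x, y)))) =
      RCLike.re (inner 𝕜 x (toEuclideanLin A x)) + 2 * RCLike.re (inner 𝕜 x (toEuclideanLin B y))
        + RCLike.re (inner 𝕜 y (toEuclideanLin C y)) := by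
  rw [toEuclideanLin_fromBlocks_blockEquiv, inner_blockEquiv, inner_add_right, inner_add_right,
    toEuclideanLin_conjTranspose_eq_adjoint, LinearMap.adjoint_inner_right, map_add, map_add,
    map_add, inner_re_symm (toEuclideanLin B y)]
  ring

theorem isHermitian_reindex_fromBlocks {A : Matrix (Fin q) (Fin q) 𝕜}
    {C : Matrix (Fin r) (Fin r) 𝕜} (hA : A.IsHermitian) (hC : C.IsHermitian)
    (B : Matrix (Fin q) (Fin r) 𝕜) :
    (reindex finSumFinEquiv finSumFinEquiv (fromBlocks A B Bᴴ C)).IsHermitian :=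
  (isHermitian_fromBlocks_iff.mpr ⟨hA, rfl, conjTranspose_conjTranspose B, hC⟩).submatrix _

end Blocks

section BlockEigenvalues

variable {q r : ℕ} {A : Matrix (Fin q) (Fin q) ℂ} {C : Matrix (Fin r) (Fin r) ℂ}
  (hA : A.IsHermitian) (hC : C.IsHermitian) (B : Matrix (Fin q) (Fin r) ℂ)

include hA hC

theorem le_eigDesc_fromBlocks (j : Fin (q + r)) (P : Submodule ℂ (EuclideanSpace ℂ (Fin q)))
    (Q : Submodule ℂ (EuclideanSpace ℂ (Fin r))) (hPQ : j + 1 ≤ finrank ℂ P + finrank ℂ Q)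
    {c : ℝ} (hc : ∀ x ∈ P, ∀ y ∈ Q, c * (‖x‖ ^ 2 + ‖y‖ ^ 2) ≤
      RCLike.re (inner ℂ x (toEuclideanLin A x)) + 2 * RCLike.re (inner ℂ x (toEuclideanLin B y))
        + RCLike.re (inner ℂ y (toEuclideanLin C y))) :
    c ≤ eigDesc (reindex finSumFinEquiv finSumFinEquiv (fromBlocks A B Bᴴ C)) j := by
  rw [eigDesc_eq_eigenvalues (isHermitian_reindex_fromBlocks hA hC B)]
  refine LinearMap.IsSymmetric.le_eigenvalues_of_forall_le_re_inner _ _ j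
    ((P.prod Q).map (blockEquiv ℂ q r : _ →ₗ[ℂ] _))
    (by rwa [LinearEquiv.finrank_map_eq, Submodule.finrank_prod]) ?_
  rintro _ ⟨⟨x, y⟩, ⟨hx, hy⟩, rfl⟩
  rw [LinearEquiv.coe_coe, norm_blockEquiv_sq, re_inner_fromBlocks_blockEquiv]
  exact hc x hx y hy

theorem eigDesc_fromBlocks_le (j : Fin (q + r)) (P : Submodule ℂ (EuclideanSpace ℂ (Fin q)))
    (Q : Submodule ℂ (EuclideanSpace ℂ (Fin r))) (hPQ : q + r - j ≤ finrank ℂ P + finrank ℂ Q)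
    {c : ℝ} (hc : ∀ x ∈ P, ∀ y ∈ Q,
      RCLike.re (inner ℂ x (toEuclideanLin A x)) + 2 * RCLike.re (inner ℂ x (toEuclideanLin B y))
        + RCLike.re (inner ℂ y (toEuclideanLin C y)) ≤ c * (‖x‖ ^ 2 + ‖y‖ ^ 2)) :
    eigDesc (reindex finSumFinEquiv finSumFinEquiv (fromBlocks A B Bᴴ C)) j ≤ c := by
  rw [eigDesc_eq_eigenvalues (isHermitian_reindex_fromBlocks hA hC B)]
  refine LinearMap.IsSymmetric.eigenvalues_le_of_forall_re_inner_le _ _ j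
    ((P.prod Q).map (blockEquiv ℂ q r : _ →ₗ[ℂ] _))
    (by rwa [LinearEquiv.finrank_map_eq, Submodule.finrank_prod]) ?_
  rintro _ ⟨⟨x, y⟩, ⟨hx, hy⟩, rfl⟩
  rw [LinearEquiv.coe_coe, norm_blockEquiv_sq, re_inner_fromBlocks_blockEquiv]
  exact hc x hx y hy

theorem eigDesc_le_eigDesc_fromBlocks_castAdd (i : Fin q) :
    eigDesc A i ≤ eigDesc (reindex finSumFinEquiv finSumFinEquiv (fromBlocks A B Bᴴ C))
      (Fin.castAdd r i) := by
  obtain ⟨P, hP, hPA⟩ := exists_finrank_eq_forall_eigDesc_mul_le_re_inner hA i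
  refine le_eigDesc_fromBlocks hA hC B _ P ⊥ (by simp [hP]) fun x hx y hy => ?_
  rw [(mem_bot ℂ).mp hy]
  simpa using hPA x hx

theorem eigDesc_fromBlocks_natAdd_le (i : Fin r) :
    eigDesc (reindex finSumFinEquiv finSumFinEquiv (fromBlocks A B Bᴴ C)) (Fin.natAdd q i) ≤
      eigDesc C i := by
  obtain ⟨Q, hQ, hQC⟩ := exists_finrank_eq_forall_re_inner_le_eigDesc_mul hC i
  refine eigDesc_fromBlocks_le hA hC B _ ⊥ Q (by simp [hQ]; omega) fun x hx y hy => ?_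
  rw [(mem_bot ℂ).mp hx]
  simpa using hQC y hy

variable (hq : 0 < q) (hr : 0 < r)
  (hgap : eigDesc C ⟨0, hr⟩ < eigDesc A ⟨q - 1, Nat.sub_one_lt_of_lt hq⟩)
include hgap

theorem eigDesc_fromBlocks_castAdd_le (i : Fin q) :
    eigDesc (reindex finSumFinEquiv finSumFinEquiv (fromBlocks A B Bᴴ C)) (Fin.castAdd r i) ≤
      eigDesc A i +
        opNorm B ^ 2 / (eigDesc A ⟨q - 1, Nat.sub_one_lt_of_lt hq⟩ - eigDesc C ⟨0, hr⟩) := by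
  set δ := eigDesc A ⟨q - 1, Nat.sub_one_lt_of_lt hq⟩ - eigDesc C ⟨0, hr⟩
  have hδ : 0 < δ := sub_pos.mpr hgap
  have hlast : eigDesc A ⟨q - 1, Nat.sub_one_lt_of_lt hq⟩ ≤ eigDesc A i :=
    eigDesc_antitone hA (Fin.le_def.mpr (by simp; omega))
  obtain ⟨P, hP, hPA⟩ := exists_finrank_eq_forall_re_inner_le_eigDesc_mul hA i
  refine eigDesc_fromBlocks_le hA hC B _ P ⊤ (by simp [hP]; omega) fun x hx y _ => ?_
  have hAx := hPA x hx
  have hCy := re_inner_le_eigDesc_zero_mul hC hr y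
  have hBxy := (abs_le.mp (abs_re_inner_toEuclideanLin_le B x y)).2
  have hamgm := two_mul_le_add_mul_sq (a := ‖y‖) (b := opNorm B * ‖x‖) hδ
  have hgap_y : δ * ‖y‖ ^ 2 ≤ (eigDesc A i - eigDesc C ⟨0, hr⟩) * ‖y‖ ^ 2 :=
    mul_le_mul_of_nonneg_right (by linarith) (sq_nonneg _)
  have hη : 0 ≤ opNorm B ^ 2 / δ * ‖y‖ ^ 2 := by positivity
  linear_combination hAx + 2 * hBxy + hCy + hamgm + hgap_y + hη

theorem eigDesc_natAdd_sub_le_eigDesc_fromBlocks (i : Fin r) :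
    eigDesc C i -
        opNorm B ^ 2 / (eigDesc A ⟨q - 1, Nat.sub_one_lt_of_lt hq⟩ - eigDesc C ⟨0, hr⟩) ≤
      eigDesc (reindex finSumFinEquiv finSumFinEquiv (fromBlocks A B Bᴴ C)) (Fin.natAdd q i) := by
  set δ := eigDesc A ⟨q - 1, Nat.sub_one_lt_of_lt hq⟩ - eigDesc C ⟨0, hr⟩
  have hδ : 0 < δ := sub_pos.mpr hgap
  have hfirst : eigDesc C i ≤ eigDesc C ⟨0, hr⟩ :=
    eigDesc_antitone hC (Fin.le_def.mpr (Nat.zero_le _))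
  obtain ⟨Q, hQ, hQC⟩ := exists_finrank_eq_forall_eigDesc_mul_le_re_inner hC i
  refine le_eigDesc_fromBlocks hA hC B _ ⊤ Q (by simp [hQ]) fun x _ y hy => ?_
  have hAx := eigDesc_last_mul_le_re_inner hA hq x
  have hCy := hQC y hy
  have hBxy := (abs_le.mp (abs_re_inner_toEuclideanLin_le B x y)).1
  have hamgm := two_mul_le_add_mul_sq (a := ‖x‖) (b := opNorm B * ‖y‖) hδ
  have hgap_x :
      δ * ‖x‖ ^ 2 ≤ (eigDesc A ⟨q - 1, Nat.sub_one_lt_of_lt hq⟩ - eigDesc C i) * ‖x‖ ^ 2 :=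
    mul_le_mul_of_nonneg_right (by linarith) (sq_nonneg _)
  have hη : 0 ≤ opNorm B ^ 2 / δ * ‖x‖ ^ 2 := by positivity
  linear_combination hAx + 2 * hBxy + hCy + hamgm + hgap_x + hη

theorem abs_eigDesc_fromBlocks_sub_append_le (j : Fin (q + r)) :
    |eigDesc (reindex finSumFinEquiv finSumFinEquiv (fromBlocks A B Bᴴ C)) j -
        Fin.append (eigDesc A) (eigDesc C) j| ≤
      opNorm B ^ 2 / (eigDesc A ⟨q - 1, Nat.sub_one_lt_of_lt hq⟩ - eigDesc C ⟨0, hr⟩) := by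
  have hη :=
    div_nonneg (sq_nonneg (opNorm B)) (sub_pos.mpr hgap).le
  refine Fin.addCases (fun i => ?_) (fun i => ?_) j <;>
    simp only [Fin.append_left, Fin.append_right, abs_le]
  · have := eigDesc_le_eigDesc_fromBlocks_castAdd hA hC B i
    have := eigDesc_fromBlocks_castAdd_le hA hC B hq hr hgap i
    constructor <;> linarith
  · have := eigDesc_fromBlocks_natAdd_le hA hC B i
    have := eigDesc_natAdd_sub_le_eigDesc_fromBlocks hA hC B hq hr hgap i
    constructor <;> linarith

end BlockEigenvalues

/-- **Wielandt-type bound for the eigenvalues of a 2×2-block Hermitian matrix versus its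
block-diagonal part.** If `λ_q(S₁₁) > λ_1(S₂₂)` then for every `j`,
`|λ_j(S) − λ_j(D)| ≤ ‖S₁₂‖² / (λ_q(S₁₁) − λ_1(S₂₂))`. -/
theorem wielandt_block_diagonal_eigenvalue_bound {q r : ℕ} (hq : 0 < q) (hr : 0 < r)
    (S₁₁ : Matrix (Fin q) (Fin q) ℂ) (S₁₂ : Matrix (Fin q) (Fin r) ℂ)
    (S₂₂ : Matrix (Fin r) (Fin r) ℂ)
    (h11 : S₁₁.IsHermitian) (h22 : S₂₂.IsHermitian)
    (hgap : eigDesc S₂₂ ⟨0, hr⟩ < eigDesc S₁₁ ⟨q - 1, by omega⟩) :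
    ∀ j : Fin (q + r),
      |eigDesc ((Matrix.reindex finSumFinEquiv finSumFinEquiv)
            (Matrix.fromBlocks S₁₁ S₁₂ S₁₂ᴴ S₂₂)) j
        - eigDesc ((Matrix.reindex finSumFinEquiv finSumFinEquiv)
            (Matrix.fromBlocks S₁₁ 0 0 S₂₂)) j|
      ≤ opNorm S₁₂ ^ 2 / (eigDesc S₁₁ ⟨q - 1, by omega⟩ - eigDesc S₂₂ ⟨0, hr⟩) := by
  intro j
  have hS := abs_eigDesc_fromBlocks_sub_append_le h11 h22 S₁₂ hq hr hgap j
  have hD := abs_eigDesc_fromBlocks_sub_append_le h11 h22 0 hq hr hgap j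
  rw [conjTranspose_zero, opNorm_zero, zero_pow two_ne_zero, zero_div, abs_nonpos_iff,
    sub_eq_zero] at hD
  rwa [hD]
end

section
/- Let D₁ be a p×p Hermitian matrix, z ∈ ℂ⁺ with v = Im z, and H any p×p complex matrix. Let u, w, a ∈ ℂ^p and t ≥ 0 be real, and set D₂ = D₁ + u u* − w w* + t·a a* (also Hermitian). Then |tr((D₂ − zI)^{-1}H) − tr((D₁ − zI)^{-1}H)| ≤ 3‖H‖/v, where ‖H‖ denotes the operator norm. -/
/-!
Each of `u u*`, `-w w*`, `t a a*` has the form `c x x*` with `c` real, so by the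
triangle inequality it suffices to bound a single such step by `‖H‖ / v`. With `R = (A - z)⁻¹`
and `y = R x`, the Sherman–Morrison formula gives
`tr((A + c x x* - z)⁻¹ H) - tr(R H) = -c (x* R H R x) / (1 + c x* R x)`.
The numerator is at most `|c| ‖H‖ ‖Rᴴ x‖ ‖R x‖ = |c| ‖H‖ ‖y‖²` because `R` is normal, while
`Im (x* R x) = v ‖y‖²` (write `x = (A - z) y`), so the denominator has modulus at least
`|c| v ‖y‖²`.
-/

open MeasureTheory Filter Matrix
open scoped ENNReal BigOperators Classical

section ShermanMorrison

variable {n K : Type*} [Fintype n] [DecidableEq n] [Field K]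

/-- **Sherman–Morrison formula**. -/
theorem Matrix.inv_add_vecMulVec {M : Matrix n n K} (hM : IsUnit M.det) (x v : n → K)
    (hd : 1 + v ⬝ᵥ M⁻¹ *ᵥ x ≠ 0) :
    (M + vecMulVec x v)⁻¹ =
      M⁻¹ - (1 + v ⬝ᵥ M⁻¹ *ᵥ x)⁻¹ • vecMulVec (M⁻¹ *ᵥ x) (v ᵥ* M⁻¹) := by
  apply inv_eq_right_inv
  rw [Matrix.add_mul, Matrix.mul_sub, Matrix.mul_sub, mul_nonsing_inv _ hM, Matrix.mul_smul,
    Matrix.mul_smul, mul_vecMulVec, mulVec_mulVec, mul_nonsing_inv _ hM, one_mulVec,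
    vecMulVec_mul, vecMulVec_mul_vecMulVec, vecMulVec_smul]
  linear_combination (norm := module) -(inv_mul_cancel₀ hd • vecMulVec x (v ᵥ* M⁻¹))

theorem Matrix.trace_inv_add_vecMulVec_mul_sub {M : Matrix n n K} (hM : IsUnit M.det)
    (x v : n → K) (hd : 1 + v ⬝ᵥ M⁻¹ *ᵥ x ≠ 0) (H : Matrix n n K) :
    ((M + vecMulVec x v)⁻¹ * H).trace - (M⁻¹ * H).trace =
      -((1 + v ⬝ᵥ M⁻¹ *ᵥ x)⁻¹ * ((v ᵥ* M⁻¹) ⬝ᵥ H *ᵥ (M⁻¹ *ᵥ x))) := by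
  rw [inv_add_vecMulVec hM x v hd, Matrix.sub_mul, trace_sub, Matrix.smul_mul, trace_smul,
    vecMulVec_mul, trace_vecMulVec, smul_eq_mul, dotProduct_comm (M⁻¹ *ᵥ x),
    ← dotProduct_mulVec]
  ring

end ShermanMorrison

section Hermitian

variable {n : Type*}

theorem Matrix.IsHermitian.add_smul_vecMulVec_star {A : Matrix n n ℂ} (hA : A.IsHermitian)
    (c : ℝ) (x : n → ℂ) : (A + (c : ℂ) • vecMulVec x (star x)).IsHermitian :=
  hA.add <| IsHermitian.smul (by rw [IsHermitian, conjTranspose_vecMulVec, star_star])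
    (Complex.conj_ofReal c)

variable [Fintype n]

theorem star_dotProduct_self_eq_norm_toLp_sq {𝕜 : Type*} [RCLike 𝕜] (y : n → 𝕜) :
    star y ⬝ᵥ y = (‖WithLp.toLp 2 y‖ : 𝕜) ^ 2 := by
  rw [dotProduct_comm, ← EuclideanSpace.inner_toLp_toLp]
  exact inner_self_eq_norm_sq_to_K _

theorem norm_toLp_conjTranspose_mulVec_of_commute {𝕜 : Type*} [RCLike 𝕜] {N : Matrix n n 𝕜}
    (hN : Commute N Nᴴ) (x : n → 𝕜) :
    ‖WithLp.toLp 2 (Nᴴ *ᵥ x)‖ = ‖WithLp.toLp 2 (N *ᵥ x)‖ := by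
  have h : (‖WithLp.toLp 2 (Nᴴ *ᵥ x)‖ : 𝕜) ^ 2 = (‖WithLp.toLp 2 (N *ᵥ x)‖ : 𝕜) ^ 2 := by
    rw [← star_dotProduct_self_eq_norm_toLp_sq, ← star_dotProduct_self_eq_norm_toLp_sq,
      star_mulVec, star_mulVec, ← dotProduct_mulVec, ← dotProduct_mulVec, mulVec_mulVec,
      mulVec_mulVec, conjTranspose_conjTranspose, hN.eq]
  exact (sq_eq_sq₀ (norm_nonneg _) (norm_nonneg _)).1 (by exact_mod_cast h)

variable [DecidableEq n] {A : Matrix n n ℂ}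

theorem Matrix.IsHermitian.isUnit_det_sub_smul_one (hA : A.IsHermitian) {z : ℂ}
    (hz : z.im ≠ 0) : IsUnit (A - z • 1).det := by
  have hz : z ∉ spectrum ℂ A := by
    rw [hA.spectrum_eq_image_range]
    rintro ⟨r, -, rfl⟩
    exact hz (Complex.ofReal_im r)
  rw [← isUnit_iff_isUnit_det, ← neg_sub, ← Algebra.algebraMap_eq_smul_one]
  exact (spectrum.notMem_iff.1 hz).neg

theorem Matrix.IsHermitian.commute_inv_sub_smul_one (hA : A.IsHermitian) (z : ℂ) :
    Commute (A - z • 1)⁻¹ (A - z • 1)⁻¹ᴴ := by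
  have hM : Commute (A - z • 1) (A - z • 1)ᴴ := by
    rw [conjTranspose_sub, hA.eq, conjTranspose_smul, conjTranspose_one]
    exact ((Commute.refl A).sub_right ((Commute.one_right A).smul_right _)).sub_left
      ((Commute.one_left _).smul_left _)
  rw [conjTranspose_nonsing_inv]
  change _ * _ = _ * _
  rw [← Matrix.mul_inv_rev, ← Matrix.mul_inv_rev, hM.eq]

theorem Matrix.IsHermitian.im_star_dotProduct_inv_sub_smul_one_mulVec (hA : A.IsHermitian)
    {z : ℂ} (hz : z.im ≠ 0) (x : n → ℂ) :
    (star x ⬝ᵥ (A - z • 1)⁻¹ *ᵥ x).im = z.im * ‖WithLp.toLp 2 ((A - z • 1)⁻¹ *ᵥ x)‖ ^ 2 := by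
  set y := (A - z • 1)⁻¹ *ᵥ x
  have hx : x = (A - z • 1) *ᵥ y := by
    rw [mulVec_mulVec, mul_nonsing_inv _ (hA.isUnit_det_sub_smul_one hz), one_mulVec]
  have hs : star x ⬝ᵥ y = star y ⬝ᵥ A *ᵥ y - star z * (‖WithLp.toLp 2 y‖ : ℂ) ^ 2 := by
    conv_lhs => rw [hx]
    rw [star_mulVec, ← dotProduct_mulVec, conjTranspose_sub, hA.eq, conjTranspose_smul,
      conjTranspose_one, sub_mulVec, dotProduct_sub, smul_mulVec, one_mulVec, dotProduct_smul,
      star_dotProduct_self_eq_norm_toLp_sq, smul_eq_mul]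
    rfl
  rw [hs, Complex.sub_im,
    show (star y ⬝ᵥ A *ᵥ y).im = 0 from hA.im_star_dotProduct_mulVec_self y]
  simp [← Complex.ofReal_pow]

end Hermitian

theorem Complex.abs_mul_im_le_norm_one_add_ofReal_mul (c : ℝ) (s : ℂ) :
    |c * s.im| ≤ ‖1 + c * s‖ := by
  simpa using abs_im_le_norm (1 + c * s)

theorem norm_star_dotProduct_mulVec_le_opNorm {m n : ℕ} (H : Matrix (Fin m) (Fin n) ℂ)
    (g : Fin m → ℂ) (y : Fin n → ℂ) :
    ‖star g ⬝ᵥ H *ᵥ y‖ ≤ opNorm H * ‖WithLp.toLp 2 g‖ * ‖WithLp.toLp 2 y‖ := by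
  set T := LinearMap.toContinuousLinearMap (toEuclideanLin H)
  have h : star g ⬝ᵥ H *ᵥ y = inner ℂ (WithLp.toLp 2 g) (T (WithLp.toLp 2 y)) := by
    rw [dotProduct_comm]; rfl
  calc ‖star g ⬝ᵥ H *ᵥ y‖ ≤ ‖WithLp.toLp 2 g‖ * ‖T (WithLp.toLp 2 y)‖ :=
        h ▸ norm_inner_le_norm _ _
    _ ≤ ‖WithLp.toLp 2 g‖ * (opNorm H * ‖WithLp.toLp 2 y‖) := by gcongr; exact T.le_opNorm _
    _ = opNorm H * ‖WithLp.toLp 2 g‖ * ‖WithLp.toLp 2 y‖ := by ring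

theorem Matrix.IsHermitian.norm_star_dotProduct_inv_sub_smul_one_mulVec_le {p : ℕ}
    {A : Matrix (Fin p) (Fin p) ℂ} (hA : A.IsHermitian) (H : Matrix (Fin p) (Fin p) ℂ) (z : ℂ)
    (x : Fin p → ℂ) :
    ‖star ((A - z • 1)⁻¹ᴴ *ᵥ x) ⬝ᵥ H *ᵥ ((A - z • 1)⁻¹ *ᵥ x)‖
      ≤ opNorm H * ‖WithLp.toLp 2 ((A - z • 1)⁻¹ *ᵥ x)‖ ^ 2 := by
  calc _ ≤ opNorm H * ‖WithLp.toLp 2 ((A - z • 1)⁻¹ᴴ *ᵥ x)‖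
        * ‖WithLp.toLp 2 ((A - z • 1)⁻¹ *ᵥ x)‖ := norm_star_dotProduct_mulVec_le_opNorm H _ _
    _ = _ := by rw [norm_toLp_conjTranspose_mulVec_of_commute (hA.commute_inv_sub_smul_one z)]; ring

theorem Matrix.IsHermitian.dist_trace_inv_add_smul_vecMulVec_mul_le {p : ℕ}
    {A : Matrix (Fin p) (Fin p) ℂ} (hA : A.IsHermitian) (H : Matrix (Fin p) (Fin p) ℂ) {z : ℂ}
    (hz : 0 < z.im) (c : ℝ) (x : Fin p → ℂ) :
    dist ((A + (c : ℂ) • vecMulVec x (star x) - z • 1)⁻¹ * H).trace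
      ((A - z • 1)⁻¹ * H).trace ≤ opNorm H / z.im := by
  have hH : 0 ≤ opNorm H := norm_nonneg _
  rcases eq_or_ne c 0 with rfl | hc
  · simpa using div_nonneg hH hz.le
  rcases eq_or_ne x 0 with rfl | hx
  · simpa using div_nonneg hH hz.le
  set R := (A - z • 1)⁻¹
  set y := R *ᵥ x
  set d := 1 + (c : ℂ) * (star x ⬝ᵥ y)
  have hR : IsUnit (A - z • 1).det := hA.isUnit_det_sub_smul_one hz.ne'
  have hy : 0 < ‖WithLp.toLp 2 y‖ := by
    have hxy : (A - z • 1) *ᵥ y = x := by rw [mulVec_mulVec, mul_nonsing_inv _ hR, one_mulVec]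
    refine norm_pos_iff.2 fun h => hx ?_
    rw [← hxy, show y = 0 from congrArg WithLp.ofLp h, mulVec_zero]
  have hquad : 0 < z.im * ‖WithLp.toLp 2 y‖ ^ 2 := by positivity
  have hd : |c| * (z.im * ‖WithLp.toLp 2 y‖ ^ 2) ≤ ‖d‖ := by
    have := Complex.abs_mul_im_le_norm_one_add_ofReal_mul c (star x ⬝ᵥ y)
    rwa [hA.im_star_dotProduct_inv_sub_smul_one_mulVec hz.ne' x, abs_mul,
      abs_of_pos hquad] at this
  have hd₀ : 0 < ‖d‖ := (mul_pos (abs_pos.2 hc) hquad).trans_le hd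
  have hdiff : ((A + (c : ℂ) • vecMulVec x (star x) - z • 1)⁻¹ * H).trace - (R * H).trace
      = -(c * d⁻¹ * (star (Rᴴ *ᵥ x) ⬝ᵥ H *ᵥ y)) := by
    rw [show A + (c : ℂ) • vecMulVec x (star x) - z • 1
        = (A - z • 1) + vecMulVec x ((c : ℂ) • star x) by rw [vecMulVec_smul]; abel,
      trace_inv_add_vecMulVec_mul_sub hR _ _ (by simpa [d] using hd₀.ne')]
    simp only [smul_dotProduct, smul_vecMul, smul_eq_mul, star_mulVec,
      conjTranspose_conjTranspose]
    ring
  rw [dist_eq_norm, hdiff, norm_neg, norm_mul, norm_mul, norm_inv, Complex.norm_real,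
    Real.norm_eq_abs]
  calc |c| * ‖d‖⁻¹ * ‖star (Rᴴ *ᵥ x) ⬝ᵥ H *ᵥ y‖
      ≤ |c| * ‖d‖⁻¹ * (opNorm H * ‖WithLp.toLp 2 y‖ ^ 2) := by
        gcongr; exact hA.norm_star_dotProduct_inv_sub_smul_one_mulVec_le H z x
    _ = opNorm H * (|c| * ‖WithLp.toLp 2 y‖ ^ 2) / ‖d‖ := by ring
    _ ≤ opNorm H * (|c| * ‖WithLp.toLp 2 y‖ ^ 2) / (|c| * (z.im * ‖WithLp.toLp 2 y‖ ^ 2)) := by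
        gcongr
    _ = opNorm H / z.im := by field_simp

theorem rank_three_resolvent_trace_bound_general {p : ℕ}
    (D₁ : Matrix (Fin p) (Fin p) ℂ) (hD₁ : D₁.IsHermitian)
    (H : Matrix (Fin p) (Fin p) ℂ)
    (z : ℂ) (hz : 0 < z.im)
    (u w a : Fin p → ℂ) (t : ℝ)
    (D₂ : Matrix (Fin p) (Fin p) ℂ)
    (hD₂ : D₂ = D₁ + Matrix.vecMulVec u (star u) - Matrix.vecMulVec w (star w)
      + (t : ℂ) • Matrix.vecMulVec a (star a)) :
    ‖((D₂ - z • 1)⁻¹ * H).trace - ((D₁ - z • 1)⁻¹ * H).trace‖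
      ≤ 3 * opNorm H / z.im := by
  have hD₁' := hD₁.add_smul_vecMulVec_star 1 u
  have h₁ := hD₁.dist_trace_inv_add_smul_vecMulVec_mul_le H hz 1 u
  have h₂ := hD₁'.dist_trace_inv_add_smul_vecMulVec_mul_le H hz (-1) w
  have h₃ := (hD₁'.add_smul_vecMulVec_star (-1) w).dist_trace_inv_add_smul_vecMulVec_mul_le
    H hz t a
  simp only [Complex.ofReal_one, one_smul, Complex.ofReal_neg, neg_smul, ← sub_eq_add_neg]
    at h₁ h₂ h₃
  rw [hD₂, ← dist_eq_norm]
  calc _ ≤ _ := dist_triangle4 _ _ _ _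
    _ ≤ opNorm H / z.im + opNorm H / z.im + opNorm H / z.im := by gcongr
    _ = 3 * opNorm H / z.im := by ring

/-- **Rank-three Hermitian perturbation resolvent bound.**
If `D₂ = D₁ + u u* − w w* + t a a*` with `t ≥ 0` and `D₁` Hermitian, then for `z ∈ ℂ⁺`
with `v = Im z`, `|tr((D₂ − zI)⁻¹ H) − tr((D₁ − zI)⁻¹ H)| ≤ 3‖H‖/v`. -/
theorem rank_three_resolvent_trace_bound {p : ℕ}
    (D₁ : Matrix (Fin p) (Fin p) ℂ) (hD₁ : D₁.IsHermitian)
    (H : Matrix (Fin p) (Fin p) ℂ)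
    (z : ℂ) (hz : 0 < z.im)
    (u w a : Fin p → ℂ) (t : ℝ) (ht : 0 ≤ t)
    (D₂ : Matrix (Fin p) (Fin p) ℂ)
    (hD₂ : D₂ = D₁ + Matrix.vecMulVec u (star u) - Matrix.vecMulVec w (star w)
      + (t : ℂ) • Matrix.vecMulVec a (star a)) :
    ‖((D₂ - z • 1)⁻¹ * H).trace - ((D₁ - z • 1)⁻¹ * H).trace‖
      ≤ 3 * opNorm H / z.im :=
  rank_three_resolvent_trace_bound_general D₁ hD₁ H z hz u w a t D₂ hD₂
end

section
/- Let A be a p×p nonnegative definite Hermitian matrix with Hermitian square root A^{1/2}, B an n×n nonnegative definite Hermitian matrix, H a p×p complex matrix, and z ∈ ℂ⁺ with v = Im z. For a p×n complex matrix X define C(X) = √(n/p)(n^{-1}A^{1/2}XBX*A^{1/2} − n^{-1}tr(B)·A). If X and X′ are p×n matrices that differ in at most one row, then |p^{-1}tr((C(X) − zI)^{-1}H) − p^{-1}tr((C(X′) − zI)^{-1}H)| ≤ 6‖H‖/(pv). -/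
open MeasureTheory Filter Matrix
open scoped ENNReal BigOperators Classical ComplexOrder

/-- The positive semidefinite square root of a positive semidefinite matrix
(the definition `Matrix.PosSemidef.sqrt` of the older Mathlib, which has since been removed). -/
noncomputable def Matrix.PosSemidef.sqrt {m : ℕ} {A : Matrix (Fin m) (Fin m) ℂ} (hA : A.PosSemidef) :
    Matrix (Fin m) (Fin m) ℂ :=
  hA.1.eigenvectorUnitary.1 * diagonal ((↑) ∘ (√·) ∘ hA.1.eigenvalues) *
  (star hA.1.eigenvectorUnitary : Matrix (Fin m) (Fin m) ℂ)

/-- The renormalized sample covariance matrix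
`C(X) = √(n/p) (n⁻¹ A^{1/2} X B X* A^{1/2} − n⁻¹ tr(B) A)`,
where `A^{1/2}` is the (Hermitian, positive semidefinite) square root of `A`. -/
noncomputable def renormCov {p n : ℕ} (A : Matrix (Fin p) (Fin p) ℂ) (hA : A.PosSemidef)
    (B : Matrix (Fin n) (Fin n) ℂ) (X : Matrix (Fin p) (Fin n) ℂ) :
    Matrix (Fin p) (Fin p) ℂ :=
  (Real.sqrt ((n : ℝ) / p) : ℂ) •
    ((n : ℂ)⁻¹ • (hA.sqrt * X * B * Xᴴ * hA.sqrt) - ((n : ℂ)⁻¹ * B.trace) • A)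

/-!
Both `C(X)` and `C(X')` are Hermitian, so for `Im z = v > 0` the resolvents `R = (C(X) - z)⁻¹`
and `R' = (C(X') - z)⁻¹` exist and have operator norm at most `1/v`, because
`|Im ⟪x, (C - z) x⟫| = v ‖x‖²`. By the resolvent identity `R - R' = R (C(X') - C(X)) R'`, and
`C(X') - C(X)` has rank at most two: with `D = X' - X` of rank one,
`X' B X'* - X B X* = D B X'* + X B D*`. Finally `|tr N| ≤ rank N · ‖N‖`, so the two traces differ
by at most `2 · (2/v) ‖H‖ = 4 ‖H‖ / v ≤ 6 ‖H‖ / v`.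
-/

open scoped InnerProductSpace

theorem LinearMap.IsSymmetric.abs_im_mul_norm_le_norm_sub_smul {E : Type*} [NormedAddCommGroup E]
    [InnerProductSpace ℂ E] {T : E →ₗ[ℂ] E} (hT : T.IsSymmetric) (z : ℂ) (x : E) :
    |z.im| * ‖x‖ ≤ ‖T x - z • x‖ := by
  rcases (norm_nonneg x).eq_or_lt' with hx | hx
  · simp [hx]
  have him : (⟪x, T x - z • x⟫_ℂ).im = -(z.im * ‖x‖ ^ 2) := by
    have hreal : (⟪x, T x⟫_ℂ).im = 0 := hT.im_inner_self_apply x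
    rw [inner_sub_right, inner_smul_right, inner_self_eq_norm_sq_to_K, Complex.sub_im, hreal,
      Complex.mul_im]
    simp [sq]
  have key : |z.im| * ‖x‖ * ‖x‖ ≤ ‖T x - z • x‖ * ‖x‖ :=
    calc |z.im| * ‖x‖ * ‖x‖ = |(⟪x, T x - z • x⟫_ℂ).im| := by
          rw [him, abs_neg, abs_mul, abs_of_nonneg (sq_nonneg ‖x‖)]; ring
      _ ≤ ‖⟪x, T x - z • x⟫_ℂ‖ := Complex.abs_im_le_norm _
      _ ≤ ‖T x - z • x‖ * ‖x‖ := (norm_inner_le_norm _ _).trans_eq (mul_comm _ _)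
  exact le_of_mul_le_mul_right key hx

theorem ContinuousLinearMap.norm_trace_le_finrank_range_mul_norm {𝕜 E : Type*} [RCLike 𝕜]
    [NormedAddCommGroup E] [InnerProductSpace 𝕜 E] [FiniteDimensional 𝕜 E] (T : E →L[𝕜] E) :
    ‖LinearMap.trace 𝕜 E (T : E →ₗ[𝕜] E)‖ ≤
      Module.finrank 𝕜 (LinearMap.range (T : E →ₗ[𝕜] E)) * ‖T‖ := by
  set V := LinearMap.range (T : E →ₗ[𝕜] E)
  -- `T` factors through its range `V`, so its trace is that of its compression to `V`.
  have hT : (T : E →ₗ[𝕜] E) = V.subtype ∘ₗ (T : E →ₗ[𝕜] E).rangeRestrict := rfl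
  let b := stdOrthonormalBasis 𝕜 V
  have hterm : ∀ i, ‖⟪b i, ((T : E →ₗ[𝕜] E).rangeRestrict ∘ₗ V.subtype) (b i)⟫_𝕜‖ ≤ ‖T‖ :=
    fun i => calc
      _ ≤ ‖(b i : E)‖ * ‖T (b i)‖ := by
        rw [Submodule.coe_inner]; exact norm_inner_le_norm (𝕜 := 𝕜) (b i : E) (T (b i))
      _ ≤ ‖T‖ := by
        have hb : ‖(b i : E)‖ = 1 := by rw [Submodule.norm_coe, b.orthonormal.1 i]
        simpa [hb] using T.le_opNorm (b i)
  rw [hT, LinearMap.trace_comp_comm', LinearMap.trace_eq_sum_inner _ b]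
  calc _ ≤ ∑ _i : Fin (Module.finrank 𝕜 V), ‖T‖ :=
        (norm_sum_le _ _).trans (Finset.sum_le_sum fun i _ => hterm i)
    _ = _ := by simp

namespace Matrix

section Rank

variable {m n : Type*} [Fintype n]

theorem rank_add_le {K : Type*} [Field K] (P Q : Matrix m n K) :
    (P + Q).rank ≤ P.rank + Q.rank := by
  have hrange : LinearMap.range (P + Q).mulVecLin ≤
      LinearMap.range P.mulVecLin ⊔ LinearMap.range Q.mulVecLin := by
    rintro x ⟨y, rfl⟩
    rw [mulVecLin_add]
    exact Submodule.mem_sup.2 ⟨_, ⟨y, rfl⟩, _, ⟨y, rfl⟩, rfl⟩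
  exact (Submodule.finrank_mono hrange).trans (Submodule.finrank_add_le_finrank_add_finrank _ _)

theorem rank_sub_le_one_of_eq_of_ne {K : Type*} [Field K] {X X' : Matrix m n K} (i₀ : m)
    (h : ∀ i, i ≠ i₀ → X i = X' i) : (X' - X).rank ≤ 1 := by
  have hrow : X' - X = vecMulVec (Pi.single i₀ 1) (X' i₀ - X i₀) := by
    ext i j
    by_cases hi : i = i₀
    · subst hi; simp [vecMulVec_apply]
    · simp [vecMulVec_apply, hi, h i hi]
  rw [hrow]
  exact rank_vecMulVec_le _ _

theorem rank_mul_mul_conjTranspose_sub_le {𝕜 : Type*} [RCLike 𝕜] [Fintype m] (B : Matrix n n 𝕜)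
    (X X' : Matrix m n 𝕜) : (X' * B * X'ᴴ - X * B * Xᴴ).rank ≤ 2 * (X' - X).rank := by
  have hsplit : X' * B * X'ᴴ - X * B * Xᴴ = (X' - X) * B * X'ᴴ + X * B * (X' - X)ᴴ := by
    simp only [conjTranspose_sub, Matrix.mul_sub, Matrix.sub_mul]
    abel
  rw [hsplit]
  refine (rank_add_le _ _).trans ?_
  have h₁ := (rank_mul_le_left ((X' - X) * B) X'ᴴ).trans (rank_mul_le_left (X' - X) B)
  have h₂ := rank_mul_le_right (X * B) (X' - X)ᴴ
  rw [rank_conjTranspose] at h₂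
  omega

end Rank

open scoped Matrix.Norms.L2Operator

theorem norm_trace_le_rank_mul_l2_opNorm {𝕜 n : Type*} [RCLike 𝕜] [Fintype n] [DecidableEq n]
    (N : Matrix n n 𝕜) : ‖N.trace‖ ≤ N.rank * ‖N‖ := by
  have htrace :
      N.trace = LinearMap.trace 𝕜 _ (toEuclideanCLM (𝕜 := 𝕜) N : EuclideanSpace 𝕜 n →ₗ[𝕜] _) := by
    rw [coe_toEuclideanCLM_eq_toEuclideanLin, toEuclideanLin_eq_toLin_orthonormal,
      LinearMap.trace_eq_matrix_trace 𝕜 (EuclideanSpace.basisFun n 𝕜).toBasis,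
      LinearMap.toMatrix_toLin]
  rw [htrace, N.rank_eq_finrank_range_toLin (EuclideanSpace.basisFun n 𝕜).toBasis
    (EuclideanSpace.basisFun n 𝕜).toBasis, ← toEuclideanLin_eq_toLin_orthonormal]
  exact (toEuclideanCLM (𝕜 := 𝕜) N).norm_trace_le_finrank_range_mul_norm

namespace IsHermitian

variable {n : Type*} [Fintype n] [DecidableEq n] {C C' : Matrix n n ℂ} {z : ℂ}

theorem abs_im_mul_norm_le (hC : C.IsHermitian) (z : ℂ) (x : EuclideanSpace ℂ n) :
    |z.im| * ‖x‖ ≤ ‖toEuclideanCLM (𝕜 := ℂ) (C - z • 1) x‖ := by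
  rw [map_sub, map_smul, map_one, _root_.sub_apply, _root_.smul_apply, one_apply_eq_self]
  exact (isSymmetric_toEuclideanLin_iff.mpr hC).abs_im_mul_norm_le_norm_sub_smul z x

theorem isUnit_sub_smul_one (hC : C.IsHermitian) (hz : z.im ≠ 0) : IsUnit (C - z • 1) := by
  rw [← mulVec_injective_iff_isUnit]
  intro v w hvw
  have h := hC.abs_im_mul_norm_le z (WithLp.toLp 2 (v - w))
  rw [toEuclideanCLM_toLp, mulVec_sub, hvw, sub_self, WithLp.toLp_zero, norm_zero] at h
  have hzero : ‖WithLp.toLp 2 (v - w)‖ = 0 := by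
    nlinarith [abs_pos.2 hz, norm_nonneg (WithLp.toLp 2 (v - w))]
  simpa [sub_eq_zero] using hzero

theorem l2_opNorm_inv_sub_smul_one_le (hC : C.IsHermitian) (hz : z.im ≠ 0) :
    ‖(C - z • 1)⁻¹‖ ≤ |z.im|⁻¹ := by
  rw [← l2_opNorm_toEuclideanCLM]
  refine ContinuousLinearMap.opNorm_le_bound _ (by positivity) fun x => ?_
  have hx :
      toEuclideanCLM (𝕜 := ℂ) (C - z • 1) (toEuclideanCLM (𝕜 := ℂ) (C - z • 1)⁻¹ x) = x := by
    have hmul := congr(toEuclideanCLM (𝕜 := ℂ) $(mul_nonsing_inv _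
      ((hC.isUnit_sub_smul_one hz).map detMonoidHom)) x)
    rwa [map_mul, map_one] at hmul
  have h := hC.abs_im_mul_norm_le z (toEuclideanCLM (𝕜 := ℂ) (C - z • 1)⁻¹ x)
  rw [hx] at h
  rwa [le_inv_mul_iff₀ (abs_pos.2 hz)]

theorem norm_trace_resolvent_sub_le (hC : C.IsHermitian) (hC' : C'.IsHermitian) (hz : z.im ≠ 0)
    (H : Matrix n n ℂ) :
    ‖((C - z • 1)⁻¹ * H).trace - ((C' - z • 1)⁻¹ * H).trace‖ ≤
      (C' - C).rank * (2 * |z.im|⁻¹ * ‖H‖) := by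
  have hresolvent :
      (C - z • 1)⁻¹ - (C' - z • 1)⁻¹ = (C - z • 1)⁻¹ * (C' - C) * (C' - z • 1)⁻¹ := by
    rw [inv_sub_inv (iff_of_true (hC.isUnit_sub_smul_one hz) (hC'.isUnit_sub_smul_one hz)),
      sub_sub_sub_cancel_right]
  have hrank : ((C - z • 1)⁻¹ * (C' - C) * (C' - z • 1)⁻¹ * H).rank ≤ (C' - C).rank :=
    (rank_mul_le_left _ _).trans ((rank_mul_le_left _ _).trans (rank_mul_le_right _ _))
  have hnorm : ‖((C - z • 1)⁻¹ - (C' - z • 1)⁻¹) * H‖ ≤ 2 * |z.im|⁻¹ * ‖H‖ :=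
    calc _ ≤ (‖(C - z • 1)⁻¹‖ + ‖(C' - z • 1)⁻¹‖) * ‖H‖ := by
          grw [l2_opNorm_mul, norm_sub_le]
      _ ≤ (|z.im|⁻¹ + |z.im|⁻¹) * ‖H‖ := by
          grw [hC.l2_opNorm_inv_sub_smul_one_le hz, hC'.l2_opNorm_inv_sub_smul_one_le hz]
      _ = 2 * |z.im|⁻¹ * ‖H‖ := by ring
  rw [← trace_sub, ← Matrix.sub_mul]
  refine (norm_trace_le_rank_mul_l2_opNorm _).trans (mul_le_mul ?_ hnorm (norm_nonneg _) ?_)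
  · rw [hresolvent]; exact_mod_cast hrank
  · positivity

end IsHermitian

end Matrix

theorem Matrix.PosSemidef.isHermitian_sqrt {m : ℕ} {A : Matrix (Fin m) (Fin m) ℂ}
    (hA : A.PosSemidef) : hA.sqrt.IsHermitian := by
  have hdiag : (diagonal ((↑) ∘ (√·) ∘ hA.1.eigenvalues) : Matrix (Fin m) (Fin m) ℂ).IsHermitian :=
    isHermitian_diagonal_of_self_adjoint _ (funext fun _ => Complex.conj_ofReal _)
  exact isHermitian_mul_mul_conjTranspose _ hdiag

section renormCov

variable {p n : ℕ} (A : Matrix (Fin p) (Fin p) ℂ) (hA : A.PosSemidef)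
  (B : Matrix (Fin n) (Fin n) ℂ)

theorem renormCov_isHermitian (hB : B.IsHermitian) (X : Matrix (Fin p) (Fin n) ℂ) :
    (renormCov A hA B X).IsHermitian := by
  have hquad : (hA.sqrt * X * B * Xᴴ * hA.sqrt).IsHermitian := by
    simpa [Matrix.mul_assoc, hA.isHermitian_sqrt.eq] using
      isHermitian_mul_mul_conjTranspose (hA.sqrt * X) hB
  have htrace : star B.trace = B.trace := by rw [← trace_conjTranspose, hB.eq]
  unfold renormCov
  simp [IsHermitian, conjTranspose_smul, hquad.eq, hA.1.eq, htrace, star_inv₀]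

theorem renormCov_sub_renormCov (X X' : Matrix (Fin p) (Fin n) ℂ) :
    renormCov A hA B X' - renormCov A hA B X =
      ((Real.sqrt ((n : ℝ) / p) : ℂ) * (n : ℂ)⁻¹) •
        (hA.sqrt * (X' * B * X'ᴴ - X * B * Xᴴ) * hA.sqrt) := by
  simp only [renormCov, ← smul_sub, sub_sub_sub_cancel_right, smul_smul, Matrix.mul_sub,
    Matrix.sub_mul, Matrix.mul_assoc]

theorem rank_renormCov_sub_renormCov_le_two {X X' : Matrix (Fin p) (Fin n) ℂ} {i₀ : Fin p}
    (hrow : ∀ i, i ≠ i₀ → X i = X' i) :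
    (renormCov A hA B X' - renormCov A hA B X).rank ≤ 2 := by
  rw [renormCov_sub_renormCov, ← smul_one_mul]
  calc _ ≤ (X' * B * X'ᴴ - X * B * Xᴴ).rank :=
        (rank_mul_le_right _ _).trans ((rank_mul_le_left _ _).trans (rank_mul_le_right _ _))
    _ ≤ 2 * (X' - X).rank := rank_mul_mul_conjTranspose_sub_le B X X'
    _ ≤ 2 := by have := rank_sub_le_one_of_eq_of_ne i₀ hrow; omega

end renormCov

open scoped Matrix.Norms.L2Operator in
theorem opNorm_eq_l2_opNorm {m n : ℕ} (M : Matrix (Fin m) (Fin n) ℂ) : opNorm M = ‖M‖ := rfl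

theorem row_replacement_resolvent_trace_bound_general {p n : ℕ}
    (A : Matrix (Fin p) (Fin p) ℂ) (hA : A.PosSemidef)
    (B : Matrix (Fin n) (Fin n) ℂ) (hB : B.PosSemidef)
    (H : Matrix (Fin p) (Fin p) ℂ)
    (z : ℂ) (hz : 0 < z.im)
    (X X' : Matrix (Fin p) (Fin n) ℂ) (i₀ : Fin p)
    (hrow : ∀ i, i ≠ i₀ → X i = X' i) :
    ‖(p : ℂ)⁻¹ * ((renormCov A hA B X - z • 1)⁻¹ * H).trace
        - (p : ℂ)⁻¹ * ((renormCov A hA B X' - z • 1)⁻¹ * H).trace‖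
      ≤ 6 * opNorm H / (p * z.im) := by
  have htrace := (renormCov_isHermitian A hA B hB.1 X).norm_trace_resolvent_sub_le
    (renormCov_isHermitian A hA B hB.1 X') hz.ne' H
  have hrank : ((renormCov A hA B X' - renormCov A hA B X).rank : ℝ) ≤ 2 := by
    exact_mod_cast rank_renormCov_sub_renormCov_le_two A hA B hrow
  rw [abs_of_pos hz] at htrace
  rw [← mul_sub, norm_mul, norm_inv, Complex.norm_natCast]
  open scoped Matrix.Norms.L2Operator in
  calc _ ≤ (p : ℝ)⁻¹ * (2 * (2 * z.im⁻¹ * ‖H‖)) := by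
        gcongr
        exact htrace.trans (by gcongr)
    _ ≤ 6 * ((p : ℝ)⁻¹ * z.im⁻¹ * ‖H‖) := by
        have hscale : 0 ≤ (p : ℝ)⁻¹ * z.im⁻¹ * ‖H‖ := by positivity
        linarith
    _ = 6 * opNorm H / (p * z.im) := by
        rw [div_eq_mul_inv, mul_inv, opNorm_eq_l2_opNorm]; ring

/-- **Row-replacement stability of the normalized resolvent trace.** If `X` and `X'` differ
in at most one row then
`|p⁻¹ tr((C(X) − zI)⁻¹ H) − p⁻¹ tr((C(X') − zI)⁻¹ H)| ≤ 6‖H‖/(p v)`. -/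
theorem row_replacement_resolvent_trace_bound {p n : ℕ} (hp : 0 < p)
    (A : Matrix (Fin p) (Fin p) ℂ) (hA : A.PosSemidef)
    (B : Matrix (Fin n) (Fin n) ℂ) (hB : B.PosSemidef)
    (H : Matrix (Fin p) (Fin p) ℂ)
    (z : ℂ) (hz : 0 < z.im)
    (X X' : Matrix (Fin p) (Fin n) ℂ) (i₀ : Fin p)
    (hrow : ∀ i, i ≠ i₀ → X i = X' i) :
    ‖(p : ℂ)⁻¹ * ((renormCov A hA B X - z • 1)⁻¹ * H).trace
        - (p : ℂ)⁻¹ * ((renormCov A hA B X' - z • 1)⁻¹ * H).trace‖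
      ≤ 6 * opNorm H / (p * z.im) :=
  row_replacement_resolvent_trace_bound_general A hA B hB H z hz X X' i₀ hrow
end

section
/- Let z ∈ ℂ⁺ with v = Im z, let Λ = diag(λ₁,…,λ_p) with λ_k ≥ 0, let b̄_n ≥ 0, and let V be a p×n complex matrix whose k-th row is v_k^*. Define Y(z) = √(n/p)(VV^* − b̄_nΛ) − zI; for each k, let V_(k) be V with its k-th row replaced by zeros, Λ_(k) = Λ − λ_k e_k e_kᵀ, Y_(k)(z) = √(n/p)(V_(k)V_(k)^* − b̄_nΛ_(k)) − zI, ω_k = √(n/p)·V_(k)v_k, and τ_kk = √(n/p)(v_k^*v_k − b̄_nλ_k). Then for each k, Im(z − τ_kk + ω_k^*Y_(k)^{-1}(z)ω_k) ≥ v > 0, and the following identities hold: (1/p)tr(Y(z)^{-1}) = −(1/p)Σ_{k=1}^p 1/(z − τ_kk + ω_k^*Y_(k)^{-1}(z)ω_k) and (1/p)tr(Y(z)^{-1}Λ) = −(1/p)Σ_{k=1}^p λ_k/(z − τ_kk + ω_k^*Y_(k)^{-1}(z)ω_k). -/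
open MeasureTheory Filter Matrix
open scoped ENNReal BigOperators Classical ComplexOrder

section

variable {p n : ℕ}

/-- `Y(z) = √(n/p)(V V* − b̄ₙ Λ) − z I`. -/
noncomputable def Ymat (V : Matrix (Fin p) (Fin n) ℂ) (lam : Fin p → ℝ) (bn : ℝ) (z : ℂ) :
    Matrix (Fin p) (Fin p) ℂ :=
  (Real.sqrt ((n : ℝ) / p) : ℂ) • (V * Vᴴ - (bn : ℂ) • Matrix.diagonal (fun i => (lam i : ℂ)))
    - z • 1

/-- `Y₍ₖ₎(z) = √(n/p)(V₍ₖ₎ V₍ₖ₎* − b̄ₙ Λ₍ₖ₎) − z I`, where `V₍ₖ₎` is `V` with its `k`-th row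
replaced by zeros and `Λ₍ₖ₎ = Λ − λₖ eₖ eₖᵀ`. -/
noncomputable def Ykmat (V : Matrix (Fin p) (Fin n) ℂ) (lam : Fin p → ℝ) (bn : ℝ) (z : ℂ)
    (k : Fin p) : Matrix (Fin p) (Fin p) ℂ :=
  (Real.sqrt ((n : ℝ) / p) : ℂ) •
      ((Matrix.updateRow V k 0) * (Matrix.updateRow V k 0)ᴴ
        - (bn : ℂ) • Matrix.diagonal (fun i => if i = k then 0 else (lam i : ℂ)))
    - z • 1

/-- `ωₖ = √(n/p) V₍ₖ₎ vₖ`, where `vₖ*` is the `k`-th row of `V`. -/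
noncomputable def omegak (V : Matrix (Fin p) (Fin n) ℂ) (k : Fin p) : Fin p → ℂ :=
  (Real.sqrt ((n : ℝ) / p) : ℂ) • ((Matrix.updateRow V k 0) *ᵥ star (V k))

/-- `τₖₖ = √(n/p)(vₖ* vₖ − b̄ₙ λₖ)`. -/
noncomputable def tauk (V : Matrix (Fin p) (Fin n) ℂ) (lam : Fin p → ℝ) (bn : ℝ)
    (k : Fin p) : ℂ :=
  (Real.sqrt ((n : ℝ) / p) : ℂ) * ((V k ⬝ᵥ star (V k)) - (bn : ℂ) * (lam k : ℂ))

/-- The quadratic form `ωₖ* Y₍ₖ₎(z)⁻¹ ωₖ`. -/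
noncomputable def quadk (V : Matrix (Fin p) (Fin n) ℂ) (lam : Fin p → ℝ) (bn : ℝ) (z : ℂ)
    (k : Fin p) : ℂ :=
  star (omegak V k) ⬝ᵥ ((Ykmat V lam bn z k)⁻¹ *ᵥ omegak V k)

end

/-!
The `k`-th row and column of `Y₍ₖ₎(z)` are those of `−z I`, and
`Y = Y₍ₖ₎ + ωₖ eₖᵀ + eₖ ωₖ* + τₖₖ eₖ eₖᵀ`. For `m = Y₍ₖ₎⁻¹ ωₖ` one has `mₖ = 0`, hence
`Y (eₖ − m) = −(z − τₖₖ + ωₖ* m) eₖ`, and reading off the `k`-th coordinate of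
`eₖ − m = −(z − τₖₖ + ωₖ* m) Y⁻¹ eₖ` gives the Schur complement formula
`(Y⁻¹)ₖₖ = −(z − τₖₖ + ωₖ* m)⁻¹`. Summing over `k` gives both trace identities.
Since `τₖₖ` is real and `Im (w* (H − z)⁻¹ w) = Im z · ‖(H − z)⁻¹ w‖² ≥ 0` for Hermitian `H`,
the denominators have imaginary part at least `Im z`.
-/

section RowDecomposition

variable {m l R : Type*} [DecidableEq m]

theorem Matrix.updateRow_zero_add_vecMulVec_single [Semiring R] (V : Matrix m l R) (k : m) :
    updateRow V k 0 + vecMulVec (Pi.single k 1) (V k) = V := by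
  ext i j
  by_cases hi : i = k
  · subst hi; simp [vecMulVec_apply]
  · simp [hi, vecMulVec_apply]

theorem Matrix.mul_conjTranspose_eq_updateRow_zero_add [Fintype l] [CommRing R] [StarRing R]
    (V : Matrix m l R) (k : m) :
    V * Vᴴ = updateRow V k 0 * (updateRow V k 0)ᴴ
      + vecMulVec (updateRow V k 0 *ᵥ star (V k)) (Pi.single k 1)
      + vecMulVec (Pi.single k 1) (star (updateRow V k 0 *ᵥ star (V k)))
      + (V k ⬝ᵥ star (V k)) • vecMulVec (Pi.single k 1) (Pi.single k 1) := by
  have hstar : star (Pi.single k 1 : m → R) = Pi.single k 1 := by simp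
  conv_lhs => rw [← updateRow_zero_add_vecMulVec_single V k]
  rw [conjTranspose_add, conjTranspose_vecMulVec, hstar, Matrix.add_mul, Matrix.mul_add,
    Matrix.mul_add, mul_vecMulVec, vecMulVec_mul, vecMulVec_mul_vecMulVec, star_mulVec,
    star_star, vecMulVec_smul, ← add_assoc]

theorem Matrix.diagonal_eq_diagonal_ite_add_vecMulVec_single [Semiring R] (d : m → R) (k : m) :
    diagonal d = diagonal (fun i => if i = k then 0 else d i)
      + d k • vecMulVec (Pi.single k 1) (Pi.single k 1) := by
  ext i j
  simp only [add_apply, smul_apply, diagonal_apply, vecMulVec_apply, Pi.single_apply]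
  split_ifs <;> simp_all

end RowDecomposition

theorem Matrix.inv_apply_self_of_eq_add_vecMulVec {ι 𝕜 : Type*} [Fintype ι] [DecidableEq ι]
    [Field 𝕜] {Y K : Matrix ι ι 𝕜} (hY : IsUnit Y.det) (hK : IsUnit K.det) {k : ι} {z τ : 𝕜}
    {ω u : ι → 𝕜} (hKcol : K *ᵥ Pi.single k 1 = -z • Pi.single k 1)
    (hKrow : Pi.single k 1 ᵥ* K = -z • Pi.single k 1) (hω : ω k = 0) (hu : u k = 0)
    (hYK : Y = K + vecMulVec ω (Pi.single k 1) + vecMulVec (Pi.single k 1) u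
      + τ • vecMulVec (Pi.single k 1) (Pi.single k 1)) :
    Y⁻¹ k k = -(z - τ + u ⬝ᵥ (K⁻¹ *ᵥ ω))⁻¹ := by
  set e : ι → 𝕜 := Pi.single k 1
  set m := K⁻¹ *ᵥ ω
  have hz : z ≠ 0 := by
    rintro rfl
    refine hK.ne_zero (exists_mulVec_eq_zero_iff.mp ⟨e, ?_, by simpa using hKcol⟩)
    simp [e]
  have hKm : K *ᵥ m = ω := by
    rw [mulVec_mulVec, mul_nonsing_inv _ hK, one_mulVec]
  have hmk : m k = 0 := by
    have h : e ⬝ᵥ (K *ᵥ m) = (e ᵥ* K) ⬝ᵥ m := dotProduct_mulVec _ _ _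
    rw [hKm, hKrow] at h
    simpa [e, hω, hz] using h
  have hYe : Y *ᵥ e = ω + (τ - z) • e := by
    simp only [hYK, add_mulVec, smul_mulVec, vecMulVec_mulVec, hKcol, neg_smul,
      dotProduct_single, Pi.single_eq_same, mul_one, MulOpposite.op_one, one_smul, hu,
      MulOpposite.op_zero, zero_smul, add_zero, e]
    module
  have hYm : Y *ᵥ m = ω + (u ⬝ᵥ m) • e := by
    simp only [hYK, add_mulVec, smul_mulVec, vecMulVec_mulVec, hKm, single_dotProduct, hmk,
      mul_zero, MulOpposite.op_zero, zero_smul, add_zero, op_smul_eq_smul, smul_zero, e]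
  have hYinv : e - m = -(z - τ + u ⬝ᵥ m) • (Y⁻¹ *ᵥ e) := by
    have hYem : Y *ᵥ (e - m) = -(z - τ + u ⬝ᵥ m) • e := by
      rw [mulVec_sub, hYe, hYm]; module
    rw [← mulVec_smul, ← hYem, mulVec_mulVec, nonsing_inv_mul _ hY, one_mulVec]
  have hdiag := congrFun hYinv k
  rw [Pi.sub_apply, Pi.smul_apply, mulVec_single_one, col_apply, smul_eq_mul, hmk,
    sub_zero] at hdiag
  simp only [e, Pi.single_eq_same] at hdiag
  rw [eq_inv_of_mul_eq_one_right hdiag.symm, inv_neg]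

namespace Matrix.IsHermitian

variable {ι : Type*} [Fintype ι] [DecidableEq ι] {H : Matrix ι ι ℂ}

theorem isUnit_det_sub_smul_one_s11 (hH : H.IsHermitian) {z : ℂ} (hz : z.im ≠ 0) :
    IsUnit (H - z • 1).det := by
  have hdet : (scalar ι z - H).det ≠ 0 := by
    rw [← eval_charpoly, hH.charpoly_eq, Polynomial.eval_prod, Finset.prod_ne_zero_iff]
    rintro i -
    simpa [sub_eq_zero] using fun h : z = _ => hz (by simp [h])
  have hneg : H - z • 1 = -(scalar ι z - H) := by
    rw [neg_sub, scalar_apply, smul_one_eq_diagonal]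
  rw [isUnit_iff_ne_zero, hneg, det_neg]
  exact mul_ne_zero (pow_ne_zero _ (by norm_num)) hdet

theorem im_star_dotProduct_inv_sub_smul_one_mulVec_nonneg (hH : H.IsHermitian) {z : ℂ}
    (hz : 0 < z.im) (w : ι → ℂ) : 0 ≤ (star w ⬝ᵥ ((H - z • 1)⁻¹ *ᵥ w)).im := by
  set y := (H - z • 1)⁻¹ *ᵥ w
  have hw : w = (H - z • 1) *ᵥ y := by
    rw [mulVec_mulVec, mul_nonsing_inv _ (hH.isUnit_det_sub_smul_one_s11 hz.ne'), one_mulVec]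
  have hwy : star w ⬝ᵥ y = star y ⬝ᵥ (H *ᵥ y) - star z * (star y ⬝ᵥ y) := by
    rw [hw, star_mulVec, ← dotProduct_mulVec, conjTranspose_sub, hH.eq, conjTranspose_smul,
      conjTranspose_one, sub_mulVec, dotProduct_sub, smul_mulVec, one_mulVec, dotProduct_smul,
      smul_eq_mul]
  obtain ⟨hre, him⟩ := Complex.nonneg_iff.mp (dotProduct_star_self_nonneg y)
  have hHy : (star y ⬝ᵥ (H *ᵥ y)).im = 0 := hH.im_star_dotProduct_mulVec_self y
  rw [hwy, Complex.sub_im, hHy, Complex.mul_im, ← him]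
  simp only [Complex.star_def, Complex.conj_re, Complex.conj_im]
  nlinarith

end Matrix.IsHermitian

theorem Matrix.isHermitian_ofReal_smul_mul_conjTranspose_sub {m l : Type*} [Fintype l]
    (W : Matrix m l ℂ) {D : Matrix m m ℂ} (hD : D.IsHermitian) (c b : ℝ) :
    ((c : ℂ) • (W * Wᴴ - (b : ℂ) • D)).IsHermitian :=
  ((isHermitian_mul_conjTranspose_self W).sub (hD.smul (Complex.conj_ofReal b))).smul
    (Complex.conj_ofReal c)

section Resolvent

variable {p n : ℕ} (V : Matrix (Fin p) (Fin n) ℂ) (lam : Fin p → ℝ) (bn : ℝ) (z : ℂ)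
  (k : Fin p)

theorem isHermitian_Ymat_add_smul_one : (Ymat V lam bn z + z • 1).IsHermitian := by
  rw [Ymat, sub_add_cancel]
  exact isHermitian_ofReal_smul_mul_conjTranspose_sub V
    (isHermitian_diagonal_iff.mpr fun _ => Complex.conj_ofReal _) _ _

theorem isHermitian_Ykmat_add_smul_one : (Ykmat V lam bn z k + z • 1).IsHermitian := by
  rw [Ykmat, sub_add_cancel]
  refine isHermitian_ofReal_smul_mul_conjTranspose_sub _
    (isHermitian_diagonal_iff.mpr fun _ => ?_) _ _
  split_ifs
  exacts [IsSelfAdjoint.zero ℂ, Complex.conj_ofReal _]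

theorem isUnit_det_Ymat (hz : z.im ≠ 0) : IsUnit (Ymat V lam bn z).det := by
  simpa using IsHermitian.isUnit_det_sub_smul_one_s11 (isHermitian_Ymat_add_smul_one V lam bn z) hz

theorem isUnit_det_Ykmat (hz : z.im ≠ 0) : IsUnit (Ykmat V lam bn z k).det := by
  simpa using IsHermitian.isUnit_det_sub_smul_one_s11 (isHermitian_Ykmat_add_smul_one V lam bn z k) hz

theorem im_quadk_nonneg (hz : 0 < z.im) : 0 ≤ (quadk V lam bn z k).im := by
  simpa [quadk] using IsHermitian.im_star_dotProduct_inv_sub_smul_one_mulVec_nonneg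
    (isHermitian_Ykmat_add_smul_one V lam bn z k) hz (omegak V k)

theorem im_tauk : (tauk V lam bn k).im = 0 := by
  have h := (Complex.nonneg_iff.mp (dotProduct_self_star_nonneg (V k))).2
  simp [tauk, ← h]

theorem omegak_self : omegak V k k = 0 := by
  simp [omegak, mulVec]

theorem Ykmat_mulVec_single : Ykmat V lam bn z k *ᵥ Pi.single k 1 = -z • Pi.single k 1 := by
  have hW : (updateRow V k 0)ᴴ *ᵥ Pi.single k 1 = 0 := by
    ext; simp
  simp only [Ykmat, sub_mulVec, smul_mulVec, ← mulVec_mulVec, hW, diagonal_mulVec_single,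
    one_mulVec]
  simp

theorem single_vecMul_Ykmat : Pi.single k 1 ᵥ* Ykmat V lam bn z k = -z • Pi.single k 1 := by
  have hW : Pi.single k 1 ᵥ* updateRow V k 0 = 0 := by
    ext; simp
  simp only [Ykmat, vecMul_sub, vecMul_smul, ← vecMul_vecMul, hW, single_vecMul_diagonal,
    vecMul_one]
  simp

theorem Ymat_eq_Ykmat_add :
    Ymat V lam bn z = Ykmat V lam bn z k + vecMulVec (omegak V k) (Pi.single k 1)
      + vecMulVec (Pi.single k 1) (star (omegak V k))
      + tauk V lam bn k • vecMulVec (Pi.single k 1) (Pi.single k 1) := by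
  have hc : star ((√((n : ℝ) / p) : ℝ) : ℂ) = (√((n : ℝ) / p) : ℝ) := Complex.conj_ofReal _
  rw [Ymat, Ykmat, omegak, tauk, mul_conjTranspose_eq_updateRow_zero_add V k,
    diagonal_eq_diagonal_ite_add_vecMulVec_single _ k, star_smul, hc, smul_vecMulVec,
    vecMulVec_smul, mul_smul]
  module

theorem Ymat_inv_apply_self (hz : z.im ≠ 0) :
    (Ymat V lam bn z)⁻¹ k k = -(z - tauk V lam bn k + quadk V lam bn z k)⁻¹ :=
  inv_apply_self_of_eq_add_vecMulVec (isUnit_det_Ymat V lam bn z hz)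
    (isUnit_det_Ykmat V lam bn z k hz) (Ykmat_mulVec_single V lam bn z k)
    (single_vecMul_Ykmat V lam bn z k) (omegak_self V k) (by simp [omegak_self])
    (Ymat_eq_Ykmat_add V lam bn z k)

end Resolvent

theorem resolvent_trace_identities_general {p n : ℕ}
    (z : ℂ) (hz : 0 < z.im)
    (lam : Fin p → ℝ)
    (bn : ℝ)
    (V : Matrix (Fin p) (Fin n) ℂ) :
    (∀ k : Fin p, z.im ≤ (z - tauk V lam bn k + quadk V lam bn z k).im) ∧
    (p : ℂ)⁻¹ * ((Ymat V lam bn z)⁻¹).trace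
      = -((p : ℂ)⁻¹ * ∑ k : Fin p, (z - tauk V lam bn k + quadk V lam bn z k)⁻¹) ∧
    (p : ℂ)⁻¹ * ((Ymat V lam bn z)⁻¹ * Matrix.diagonal (fun i => (lam i : ℂ))).trace
      = -((p : ℂ)⁻¹ * ∑ k : Fin p,
          (lam k : ℂ) * (z - tauk V lam bn k + quadk V lam bn z k)⁻¹) := by
  have hdiag k := Ymat_inv_apply_self V lam bn z k hz.ne'
  refine ⟨fun k => ?_, ?_, ?_⟩
  · have hquad := im_quadk_nonneg V lam bn z k hz
    simp only [Complex.add_im, Complex.sub_im, im_tauk]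
    linarith
  · simp only [trace, diag_apply, hdiag, Finset.sum_neg_distrib, mul_neg]
  · simp only [trace, diag_apply, mul_diagonal, hdiag, mul_comm, Finset.sum_neg_distrib,
      mul_neg]

/-- **Exact resolvent trace identities.** For `z ∈ ℂ⁺`, each denominator
`z − τₖₖ + ωₖ* Y₍ₖ₎(z)⁻¹ ωₖ` has imaginary part at least `v = Im z > 0`, and
`p⁻¹ tr(Y(z)⁻¹) = −p⁻¹ Σₖ (z − τₖₖ + ωₖ*Y₍ₖ₎(z)⁻¹ωₖ)⁻¹` and
`p⁻¹ tr(Y(z)⁻¹ Λ) = −p⁻¹ Σₖ λₖ (z − τₖₖ + ωₖ*Y₍ₖ₎(z)⁻¹ωₖ)⁻¹`. -/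
theorem resolvent_trace_identities {p n : ℕ} (hp : 0 < p)
    (z : ℂ) (hz : 0 < z.im)
    (lam : Fin p → ℝ) (hlam : ∀ k, 0 ≤ lam k)
    (bn : ℝ) (hbn : 0 ≤ bn)
    (V : Matrix (Fin p) (Fin n) ℂ) :
    (∀ k : Fin p, z.im ≤ (z - tauk V lam bn k + quadk V lam bn z k).im) ∧
    (p : ℂ)⁻¹ * ((Ymat V lam bn z)⁻¹).trace
      = -((p : ℂ)⁻¹ * ∑ k : Fin p, (z - tauk V lam bn k + quadk V lam bn z k)⁻¹) ∧
    (p : ℂ)⁻¹ * ((Ymat V lam bn z)⁻¹ * Matrix.diagonal (fun i => (lam i : ℂ))).trace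
      = -((p : ℂ)⁻¹ * ∑ k : Fin p,
          (lam k : ℂ) * (z - tauk V lam bn k + quadk V lam bn z k)⁻¹) :=
  resolvent_trace_identities_general z hz lam bn V
end

section
/- Let μ be a probability measure on [0,∞) with μ({0}) < 1, let b̄₂ > 0, and let z ∈ ℂ with Im z = v > 0. Suppose β and β′ both have nonnegative imaginary part and both satisfy the fixed-point equation β = −∫ a/(z + b̄₂ a β) dμ(a) (respectively with β′ in place of β). Then |∫ b̄₂ a²/((z + b̄₂ a β)(z + b̄₂ a β′)) dμ(a)| < 1. -/
/-!
Write `D_β(a) = z + b̄₂ a β`. Taking imaginary parts in the fixed-point equation gives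
`Im β = Im z · ∫ a / |D_β|² dμ + Im β · ω(β)` with `ω(β) = ∫ b̄₂ a² / |D_β|² dμ`; the first term is
positive because `μ` charges `(0, ∞)`, so `Im β > 0` and `ω(β) < 1`. By AM–GM,
`|b̄₂ a² / (D_β D_β′)| ≤ (b̄₂ a² / |D_β|² + b̄₂ a² / |D_β′|²) / 2`, so the integral has modulus at
most `(ω(β) + ω(β′)) / 2 < 1`.

Since a non-integrable function has Bochner integral `0`, the fixed-point equation also admits the
spurious solution `β = 0` when `a ↦ a / z` (equivalently `a`) is not integrable. In that case
the integrand of the claim grows linearly in `a`, so it is not integrable either and its integral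
is `0`.
-/

open MeasureTheory

section Pointwise

variable {b a : ℝ} {z β : ℂ}

lemma im_le_im_add_mul (hb : 0 ≤ b) (ha : 0 ≤ a) (hβ : 0 ≤ β.im) :
    z.im ≤ (z + (b : ℂ) * (a : ℂ) * β).im := by
  have him : ((b : ℂ) * (a : ℂ) * β).im = b * a * β.im := by simp [Complex.mul_im]
  rw [Complex.add_im, him]
  linarith [mul_nonneg (mul_nonneg hb ha) hβ]

lemma add_mul_ne_zero (hz : 0 < z.im) (hb : 0 ≤ b) (ha : 0 ≤ a) (hβ : 0 ≤ β.im) :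
    z + (b : ℂ) * (a : ℂ) * β ≠ 0 := fun h => by
  have him := im_le_im_add_mul (z := z) hb ha hβ
  rw [h, Complex.zero_im] at him
  linarith

lemma neg_im_div_add_mul (b a : ℝ) (z β : ℂ) :
    -((a : ℂ) / (z + (b : ℂ) * (a : ℂ) * β)).im =
      z.im * (a / Complex.normSq (z + (b : ℂ) * (a : ℂ) * β)) +
        β.im * (b * a ^ 2 / Complex.normSq (z + (b : ℂ) * (a : ℂ) * β)) := by
  simp only [Complex.div_im, Complex.ofReal_re, Complex.ofReal_im, Complex.add_im, Complex.mul_im,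
    Complex.mul_re]
  ring

lemma norm_ofReal_div_mul_le {c : ℝ} (hc : 0 ≤ c) (x y : ℂ) :
    ‖(c : ℂ) / (x * y)‖ ≤ (c / Complex.normSq x + c / Complex.normSq y) / 2 := by
  rw [norm_div, norm_mul, Complex.norm_real, Real.norm_of_nonneg hc, Complex.normSq_eq_norm_sq,
    Complex.normSq_eq_norm_sq]
  calc c / (‖x‖ * ‖y‖) = c * (‖x‖⁻¹ * ‖y‖⁻¹) := by rw [div_eq_mul_inv, mul_inv]
    _ ≤ c * ((‖x‖⁻¹ ^ 2 + ‖y‖⁻¹ ^ 2) / 2) := by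
      gcongr
      linarith [two_mul_le_add_sq ‖x‖⁻¹ ‖y‖⁻¹]
    _ = (c / ‖x‖ ^ 2 + c / ‖y‖ ^ 2) / 2 := by rw [inv_pow, inv_pow]; ring

lemma le_one_add_mul_norm_div (hb : 0 < b) (hz : z ≠ 0) (ha : 0 ≤ a)
    (hD : z + (b : ℂ) * (a : ℂ) * β ≠ 0) :
    a ≤ 1 + ‖z‖ * (‖z‖ + b * ‖β‖) / b *
      ‖(b : ℂ) * (a : ℂ) ^ 2 / (z * (z + (b : ℂ) * (a : ℂ) * β))‖ := by
  rcases le_or_gt a 1 with ha1 | ha1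
  · have : 0 ≤ ‖z‖ * (‖z‖ + b * ‖β‖) / b *
        ‖(b : ℂ) * (a : ℂ) ^ 2 / (z * (z + (b : ℂ) * (a : ℂ) * β))‖ := by positivity
    linarith
  have hz' : 0 < ‖z‖ := norm_pos_iff.2 hz
  have hD' : 0 < ‖z + (b : ℂ) * (a : ℂ) * β‖ := norm_pos_iff.2 hD
  have hDle : ‖z + (b : ℂ) * (a : ℂ) * β‖ ≤ a * (‖z‖ + b * ‖β‖) := by
    calc ‖z + (b : ℂ) * (a : ℂ) * β‖ ≤ ‖z‖ + b * a * ‖β‖ := by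
          refine (norm_add_le _ _).trans_eq ?_
          rw [norm_mul, norm_mul, Complex.norm_real, Complex.norm_real, Real.norm_of_nonneg hb.le,
            Real.norm_of_nonneg ha]
      _ ≤ a * (‖z‖ + b * ‖β‖) := by nlinarith [norm_nonneg β]
  rw [norm_div, norm_mul, norm_mul, norm_pow, Complex.norm_real, Complex.norm_real,
    Real.norm_of_nonneg hb.le, Real.norm_of_nonneg ha]
  calc a ≤ (‖z‖ + b * ‖β‖) * a ^ 2 / ‖z + (b : ℂ) * (a : ℂ) * β‖ := by
        rw [le_div_iff₀ hD']
        nlinarith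
    _ = ‖z‖ * (‖z‖ + b * ‖β‖) / b * (b * a ^ 2 / (‖z‖ * ‖z + (b : ℂ) * (a : ℂ) * β‖)) := by
      field_simp
    _ ≤ _ := le_add_of_nonneg_left zero_le_one

end Pointwise

lemma ae_nonneg_of_measure_Iio_eq_zero {μ : Measure ℝ} (h : μ (Set.Iio 0) = 0) :
    ∀ᵐ a ∂μ, 0 ≤ a :=
  (measure_eq_zero_iff_ae_notMem.1 h).mono fun _ ha => not_lt.1 ha

lemma measure_Ioi_pos_of_measure_singleton_lt_one {μ : Measure ℝ} [IsProbabilityMeasure μ]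
    (hsupp : μ (Set.Iio 0) = 0) (h0 : μ {0} < 1) : 0 < μ (Set.Ioi 0) := by
  have hIic : μ (Set.Iic 0) < 1 :=
    calc μ (Set.Iic 0) = μ (Set.Iio 0 ∪ {0}) := by rw [Set.Iio_union_right]
      _ ≤ μ (Set.Iio 0) + μ {0} := measure_union_le _ _
      _ < 1 := by rwa [hsupp, zero_add]
  rw [← Set.compl_Iic, prob_compl_eq_one_sub measurableSet_Iic]
  exact tsub_pos_of_lt hIic

section FixedPoint

variable {μ : Measure ℝ} {b : ℝ} {z β γ : ℂ}

lemma integrable_weight_and_integral_weight_lt_one (hae : ∀ᵐ a ∂μ, 0 ≤ a)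
    (hpos : 0 < μ (Set.Ioi 0)) (hb : 0 ≤ b) (hz : 0 < z.im) (hβ : 0 ≤ β.im)
    (hfix : β = -∫ a, (a : ℂ) / (z + (b : ℂ) * (a : ℂ) * β) ∂μ)
    (hf : Integrable (fun a : ℝ => (a : ℂ) / (z + (b : ℂ) * (a : ℂ) * β)) μ) :
    Integrable (fun a : ℝ => b * a ^ 2 / Complex.normSq (z + (b : ℂ) * (a : ℂ) * β)) μ ∧
      ∫ a, b * a ^ 2 / Complex.normSq (z + (b : ℂ) * (a : ℂ) * β) ∂μ < 1 := by
  set g₁ : ℝ → ℝ := fun a => a / Complex.normSq (z + (b : ℂ) * (a : ℂ) * β)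
  set g₂ : ℝ → ℝ := fun a => b * a ^ 2 / Complex.normSq (z + (b : ℂ) * (a : ℂ) * β)
  have hT : Integrable (fun a => z.im * g₁ a + β.im * g₂ a) μ :=
    hf.im.neg.congr (.of_forall fun a => by
      simpa only [Pi.neg_apply, RCLike.im_to_complex] using neg_im_div_add_mul b a z β)
  have hg₁_nonneg : ∀ᵐ a ∂μ, 0 ≤ g₁ a :=
    hae.mono fun a ha => div_nonneg ha (Complex.normSq_nonneg _)
  have hg₂_nonneg : ∀ a, 0 ≤ g₂ a := fun a =>
    div_nonneg (mul_nonneg hb (sq_nonneg a)) (Complex.normSq_nonneg _)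
  have hm₁ : Measurable g₁ := by simp only [g₁]; fun_prop
  have hm₂ : Measurable g₂ := by simp only [g₂]; fun_prop
  have hg₁ : Integrable (fun a => z.im * g₁ a) μ :=
    hT.mono' (hm₁.const_mul _).aestronglyMeasurable <| hg₁_nonneg.mono fun a ha => by
      rw [Real.norm_of_nonneg (mul_nonneg hz.le ha)]
      linarith [mul_nonneg hβ (hg₂_nonneg a)]
  have hg₂ : Integrable (fun a => β.im * g₂ a) μ :=
    hT.mono' (hm₂.const_mul _).aestronglyMeasurable <| hg₁_nonneg.mono fun a ha => by
      rw [Real.norm_of_nonneg (mul_nonneg hβ (hg₂_nonneg a))]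
      linarith [mul_nonneg hz.le ha]
  have hβ_eq : β.im = z.im * ∫ a, g₁ a ∂μ + β.im * ∫ a, g₂ a ∂μ := by
    calc β.im = -RCLike.im (∫ a, (a : ℂ) / (z + (b : ℂ) * (a : ℂ) * β) ∂μ) := by
          conv_lhs => rw [hfix]
          rfl
      _ = ∫ a, -((a : ℂ) / (z + (b : ℂ) * (a : ℂ) * β)).im ∂μ := by
          rw [← integral_im hf, ← integral_neg]
          rfl
      _ = ∫ a, (z.im * g₁ a + β.im * g₂ a) ∂μ := by simp only [neg_im_div_add_mul]; rfl
      _ = z.im * ∫ a, g₁ a ∂μ + β.im * ∫ a, g₂ a ∂μ := by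
          rw [integral_add hg₁ hg₂, integral_const_mul, integral_const_mul]
  have hI₁ : 0 < ∫ a, g₁ a ∂μ := by
    rw [integral_pos_iff_support_of_nonneg_ae hg₁_nonneg
      ((integrable_const_mul_iff (isUnit_iff_ne_zero.2 hz.ne') g₁).1 hg₁)]
    refine hpos.trans_le (measure_mono fun a (ha : 0 < a) => (div_pos ha ?_).ne')
    exact Complex.normSq_pos.2 (add_mul_ne_zero hz hb ha.le hβ)
  have hprod : 0 < β.im * (1 - ∫ a, g₂ a ∂μ) := by nlinarith [mul_pos hz hI₁]
  have hβ_ne : β.im ≠ 0 := left_ne_zero_of_mul hprod.ne'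
  exact ⟨(integrable_const_mul_iff (isUnit_iff_ne_zero.2 hβ_ne) g₂).1 hg₂,
    by linarith [pos_of_mul_pos_right hprod hβ]⟩

lemma integral_eq_zero_of_not_integrable [IsFiniteMeasure μ] (hae : ∀ᵐ a ∂μ, 0 ≤ a)
    (hb : 0 < b) (hz : 0 < z.im) (hγ : 0 ≤ γ.im)
    (hfix : β = -∫ a, (a : ℂ) / (z + (b : ℂ) * (a : ℂ) * β) ∂μ)
    (hf : ¬ Integrable (fun a : ℝ => (a : ℂ) / (z + (b : ℂ) * (a : ℂ) * β)) μ) :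
    ∫ a, (b : ℂ) * (a : ℂ) ^ 2 / ((z + (b : ℂ) * (a : ℂ) * β) * (z + (b : ℂ) * (a : ℂ) * γ)) ∂μ
      = 0 := by
  have hβ0 : β = 0 := by rwa [integral_undef hf, neg_zero] at hfix
  subst hβ0
  have hid : ¬ Integrable (fun a : ℝ => a) μ := fun h =>
    hf ((h.ofReal.div_const z).congr (.of_forall fun a => by simp))
  refine integral_undef fun hg => hid ?_
  simp only [mul_zero, add_zero] at hg
  have hz0 : z ≠ 0 := fun h => by simp [h] at hz
  refine ((integrable_const 1).add (hg.norm.const_mul (‖z‖ * (‖z‖ + b * ‖γ‖) / b))).mono'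
    (by fun_prop) ?_
  filter_upwards [hae] with a ha
  rw [Real.norm_of_nonneg ha]
  exact le_one_add_mul_norm_div hb hz0 ha (add_mul_ne_zero hz hb.le ha hγ)

end FixedPoint

/-- **Contraction bound.** If `β` and `β′` both have nonnegative imaginary part and both solve
the fixed-point equation `β = −∫ a/(z + b̄₂ a β) dμ(a)` for a probability measure `μ` on `[0,∞)`
with `μ({0}) < 1`, `b̄₂ > 0` and `Im z > 0`, then
`|∫ b̄₂ a²/((z + b̄₂ a β)(z + b̄₂ a β′)) dμ(a)| < 1`. -/
theorem fixed_point_contraction_bound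
    (μ : Measure ℝ) [IsProbabilityMeasure μ]
    (hsupp : μ (Set.Iio 0) = 0) (h0 : μ {0} < 1)
    (b2 : ℝ) (hb2 : 0 < b2)
    (z : ℂ) (hz : 0 < z.im)
    (β β' : ℂ) (hβim : 0 ≤ β.im) (hβ'im : 0 ≤ β'.im)
    (hfix : β = - ∫ a, (a : ℂ) / (z + (b2 : ℂ) * (a : ℂ) * β) ∂μ)
    (hfix' : β' = - ∫ a, (a : ℂ) / (z + (b2 : ℂ) * (a : ℂ) * β') ∂μ) :
    ‖(∫ a, ((b2 : ℂ) * (a : ℂ) ^ 2) /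
        ((z + (b2 : ℂ) * (a : ℂ) * β) * (z + (b2 : ℂ) * (a : ℂ) * β')) ∂μ)‖ < 1 := by
  have hae := ae_nonneg_of_measure_Iio_eq_zero hsupp
  by_cases hf : Integrable (fun a : ℝ => (a : ℂ) / (z + (b2 : ℂ) * (a : ℂ) * β)) μ
  swap
  · rw [integral_eq_zero_of_not_integrable hae hb2 hz hβ'im hfix hf, norm_zero]
    exact zero_lt_one
  by_cases hf' : Integrable (fun a : ℝ => (a : ℂ) / (z + (b2 : ℂ) * (a : ℂ) * β')) μ
  swap
  · simp_rw [mul_comm (z + (b2 : ℂ) * _ * β)]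
    rw [integral_eq_zero_of_not_integrable hae hb2 hz hβim hfix' hf', norm_zero]
    exact zero_lt_one
  have hpos := measure_Ioi_pos_of_measure_singleton_lt_one hsupp h0
  obtain ⟨hw, hω⟩ :=
    integrable_weight_and_integral_weight_lt_one hae hpos hb2.le hz hβim hfix hf
  obtain ⟨hw', hω'⟩ :=
    integrable_weight_and_integral_weight_lt_one hae hpos hb2.le hz hβ'im hfix' hf'
  calc _ ≤ ∫ a, ‖(b2 : ℂ) * (a : ℂ) ^ 2 /
          ((z + (b2 : ℂ) * (a : ℂ) * β) * (z + (b2 : ℂ) * (a : ℂ) * β'))‖ ∂μ :=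
        norm_integral_le_integral_norm _
    _ ≤ ∫ a, (b2 * a ^ 2 / Complex.normSq (z + (b2 : ℂ) * (a : ℂ) * β) +
          b2 * a ^ 2 / Complex.normSq (z + (b2 : ℂ) * (a : ℂ) * β')) / 2 ∂μ :=
        integral_mono_of_nonneg (.of_forall fun _ => norm_nonneg _) ((hw.add hw').div_const 2)
          (.of_forall fun a => by
            have h := norm_ofReal_div_mul_le (c := b2 * a ^ 2) (by positivity)
              (z + (b2 : ℂ) * (a : ℂ) * β) (z + (b2 : ℂ) * (a : ℂ) * β')
            push_cast at h
            exact h)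
    _ = ((∫ a, b2 * a ^ 2 / Complex.normSq (z + (b2 : ℂ) * (a : ℂ) * β) ∂μ) +
          ∫ a, b2 * a ^ 2 / Complex.normSq (z + (b2 : ℂ) * (a : ℂ) * β') ∂μ) / 2 := by
        rw [integral_div, integral_add hw hw']
    _ < 1 := by linarith
end
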